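/- arXiv:1102.1259 — 6 statements merged into one kernel-verified Lean document; each statement's English description precedes it below -/
import Mathlib

section
/- Let k > 0 and β ∈ ℝ with β ≥ −β_c(k). Then the only solution of the stationary beam problem with f = 0 is the null solution u ≡ 0 (the straight equilibrium position). -/
open Real Set

/-- `μ_n(k) = k/(n²π²) + n²π²`. -/
noncomputable def mu (k : ℝ) (n : ℕ) : ℝ := k / ((n : ℝ)^2 * π^2) + (n : ℝ)^2 * π^2

/-- `β_c(k) = min_{n ≥ 1} μ_n(k)`. -/
noncomputable def betaC (k : ℝ) : ℝ := sInf {x : ℝ | ∃ n : ℕ, 1 ≤ n ∧ x = mu k n}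

/-- `u` is a solution of the stationary beam problem with `f = 0`:
`u ∈ C⁴([0,1])`, `u'''' - (β + ∫₀¹ u'(ξ)² dξ) u'' + k u = 0` on `[0,1]`,
with hinged boundary conditions. -/
def IsStatSol (k β : ℝ) (u : ℝ → ℝ) : Prop :=
  ContDiffOn ℝ 4 u (Icc (0:ℝ) 1) ∧
  (∀ x ∈ Icc (0:ℝ) 1,
    iteratedDerivWithin 4 u (Icc (0:ℝ) 1) x
      - (β + ∫ ξ in (0:ℝ)..1, (iteratedDerivWithin 1 u (Icc (0:ℝ) 1) ξ)^2)
        * iteratedDerivWithin 2 u (Icc (0:ℝ) 1) x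
      + k * u x = 0) ∧
  u 0 = 0 ∧ u 1 = 0 ∧
  iteratedDerivWithin 2 u (Icc (0:ℝ) 1) 0 = 0 ∧
  iteratedDerivWithin 2 u (Icc (0:ℝ) 1) 1 = 0

/-!
Multiplying the equation by `u` and integrating by parts twice (the boundary terms vanish by the
hinged conditions) gives, with `X, Y, Z` the squared `L²(0,1)` norms of `u, u', u''`,
`Z + (β + Y) Y + k X = 0`.
Extend `u` oddly, `u'` evenly and `u''` oddly to `[-1, 1]`. Since `u(±1) = 0`, the extension of `u`
is `2`-periodic, so the Fourier coefficients of the three extensions are `c_n`, `iπn c_n` and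
`-π²n² c_n`, and Parseval gives `Z - β_c Y + k X = ∑ (π⁴n⁴ - β_c π²n² + k) |c_n|²`. Every term is
nonnegative because `β_c ≤ μ_|n|(k)`, so `Y² = -(Z + k X) - β Y ≤ -(β_c + β) Y ≤ 0`. Hence
`Y = 0`, then `X = 0`, and `u` vanishes by continuity.
-/

open MeasureTheory intervalIntegral Complex

theorem ContDiffOn.hasDerivWithinAt_iteratedDerivWithin {𝕜 F : Type*} [NontriviallyNormedField 𝕜]
    [NormedAddCommGroup F] [NormedSpace 𝕜 F] {f : 𝕜 → F} {s : Set 𝕜} {n : WithTop ℕ∞} {m : ℕ}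
    {x : 𝕜} (h : ContDiffOn 𝕜 n f s) (hmn : m < n) (hs : UniqueDiffOn 𝕜 s) (hx : x ∈ s) :
    HasDerivWithinAt (iteratedDerivWithin m f s) (iteratedDerivWithin (m + 1) f s x) s x := by
  rw [iteratedDerivWithin_succ]
  exact (h.differentiableOn_iteratedDerivWithin hmn hs x hx).hasDerivWithinAt

theorem ContinuousOn.memLp_restrict_Ioc {E : Type*} [NormedAddCommGroup E] {f : ℝ → E} {a b : ℝ}
    (hf : ContinuousOn f (Icc a b)) (p : ENNReal) : MemLp f p (volume.restrict (Ioc a b)) := by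
  obtain ⟨C, hC⟩ := isCompact_Icc.exists_bound_of_continuousOn hf
  have hbound : ∀ᵐ x ∂volume.restrict (Ioc a b), ‖f x‖ ≤ C :=
    (ae_restrict_iff' measurableSet_Ioc).2 (.of_forall fun x hx => hC x (Ioc_subset_Icc_self hx))
  exact (memLp_top_of_bound ((hf.mono Ioc_subset_Icc_self).aestronglyMeasurable measurableSet_Ioc)
    C hbound).mono_exponent le_top

theorem integral_deriv_mul_eq_neg_of_eq_zero {a b : ℝ} (hab : a ≤ b) {f f' g g' : ℝ → ℝ}
    (hf : ∀ x ∈ Icc a b, HasDerivWithinAt f (f' x) (Icc a b) x)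
    (hg : ∀ x ∈ Icc a b, HasDerivWithinAt g (g' x) (Icc a b) x)
    (hf' : ContinuousOn f' (Icc a b)) (hg' : ContinuousOn g' (Icc a b))
    (ha : g a = 0) (hb : g b = 0) :
    ∫ x in a..b, f' x * g x = -∫ x in a..b, f x * g' x := by
  rw [← uIcc_of_le hab] at hf hg
  have := integral_mul_deriv_eq_deriv_mul_of_hasDerivWithinAt hg hf
    (hg'.intervalIntegrable_of_Icc hab) (hf'.intervalIntegrable_of_Icc hab)
  simp only [ha, hb, zero_mul, sub_zero, zero_sub] at this
  simp only [mul_comm (f' _), mul_comm (f _), this]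

theorem integral_eq_two_mul_of_comp_neg {F : ℝ → ℝ} {a : ℝ} (hF : ∀ x, F (-x) = F x)
    (hc : IntervalIntegrable F volume 0 a) :
    ∫ x in -a..a, F x = 2 * ∫ x in 0..a, F x := by
  have hc' : IntervalIntegrable F volume (-a) 0 := by
    simpa [hF] using ((IntervalIntegrable.iff_comp_neg (by simp)).1 hc).symm
  rw [← integral_add_adjacent_intervals hc' hc, two_mul]
  congr 1
  simpa [hF] using (integral_comp_neg (a := 0) (b := a) F).symm

theorem eq_zero_of_integral_sq_eq_zero {f : ℝ → ℝ} {a b : ℝ} (hab : a < b)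
    (hf : ContinuousOn f (Icc a b)) (h : ∫ x in a..b, f x ^ 2 = 0) : ∀ x ∈ Icc a b, f x = 0 := by
  by_contra! ⟨c, hc, hfc⟩
  have := integral_lt_integral_of_continuousOn_of_le_of_exists_lt hab continuousOn_const
    (hf.pow 2) (fun x _ => sq_nonneg (f x)) ⟨c, hc, sq_pos_of_ne_zero hfc⟩
  simp [h] at this

theorem fourierCoeffOn_deriv_of_eq {a b : ℝ} (hab : a < b) {f f' : ℝ → ℂ}
    (hf : ContinuousOn f (Icc a b)) (hff' : ∀ x ∈ Ioo a b, HasDerivWithinAt f (f' x) (Ioi x) x)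
    (hf' : IntervalIntegrable f' volume a b) (hper : f a = f b) (n : ℤ) :
    fourierCoeffOn hab f' n = 2 * π * I * n / (b - a) * fourierCoeffOn hab f n := by
  rw [← uIcc_of_le hab.le] at hf
  replace hff' : ∀ x ∈ Ioo (min a b) (max a b), HasDerivWithinAt f (f' x) (Ioi x) x := by
    rwa [min_eq_left hab.le, max_eq_right hab.le]
  rcases eq_or_ne n 0 with rfl | hn
  · rw [fourierCoeffOn_eq_integral]
    simp [integral_eq_sub_of_hasDeriv_right hf hff' hf', hper]
  · have hba : (b : ℂ) - a ≠ 0 := sub_ne_zero.2 (ofReal_injective.ne hab.ne')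
    rw [fourierCoeffOn_of_hasDeriv_right hab hn hf hff' hf', hper, sub_self, mul_zero, zero_sub]
    field_simp

theorem hasSum_sq_fourierCoeffOn_of_sq_comp_neg {F : ℝ → ℝ} {a : ℝ} (ha : -a < a)
    (hF : ∀ x, F (-x) ^ 2 = F x ^ 2) (hc : ContinuousOn F (Icc (-a) a)) :
    HasSum (fun n => ‖fourierCoeffOn ha (fun x => (F x : ℂ)) n‖ ^ 2)
      (a⁻¹ * ∫ x in 0..a, F x ^ 2) := by
  have hcC : ContinuousOn (fun x => (F x : ℂ)) (Icc (-a) a) :=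
    continuous_ofReal.comp_continuousOn hc
  convert hasSum_sq_fourierCoeffOn ha (hcC.memLp_restrict_Ioc 2) using 1
  simp only [norm_real, norm_eq_abs, sq_abs, smul_eq_mul]
  rw [integral_eq_two_mul_of_comp_neg (F := fun x => F x ^ 2) hF ((hc.pow 2).mono
    (Icc_subset_Icc (by linarith) le_rfl) |>.intervalIntegrable_of_Icc (by linarith))]
  field_simp
  ring

namespace HingedBeam

/-- The odd extension of `g` from `[0, 1]` when `g 0 = 0`, written with `max` so that it is
continuous on `[-1, 1]` whenever `g` is continuous on `[0, 1]`. -/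
def oddExt (g : ℝ → ℝ) (x : ℝ) : ℝ := g (max x 0) - g (max (-x) 0)

def evenExt (g : ℝ → ℝ) (x : ℝ) : ℝ := g |x|

noncomputable def coeff (F : ℝ → ℝ) (n : ℤ) : ℂ :=
  fourierCoeffOn (by norm_num : (-1 : ℝ) < 1) (fun x => (F x : ℂ)) n

section Extension

variable {g g' : ℝ → ℝ} {x : ℝ}

lemma oddExt_of_nonneg (hx : 0 ≤ x) : oddExt g x = g x - g 0 := by
  simp [oddExt, hx]

lemma oddExt_of_nonpos (hx : x ≤ 0) : oddExt g x = g 0 - g (-x) := by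
  simp [oddExt, hx]

lemma oddExt_neg : oddExt g (-x) = -oddExt g x := by
  simp [oddExt]

lemma evenExt_neg : evenExt g (-x) = evenExt g x := by
  simp [evenExt]

lemma continuousOn_oddExt (hg : ContinuousOn g (Icc 0 1)) :
    ContinuousOn (oddExt g) (Icc (-1) 1) := by
  have hmax : ∀ {y : ℝ}, y ≤ 1 → max y 0 ∈ Icc (0 : ℝ) 1 :=
    fun hy => ⟨le_max_right _ _, max_le hy zero_le_one⟩
  exact (hg.comp (by fun_prop) fun y hy => hmax hy.2).sub
    (hg.comp (by fun_prop) fun y hy => hmax (by linarith [hy.1]))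

lemma continuousOn_evenExt (hg : ContinuousOn g (Icc 0 1)) :
    ContinuousOn (evenExt g) (Icc (-1) 1) :=
  hg.comp continuous_abs.continuousOn fun _ hy => ⟨abs_nonneg _, abs_le.2 hy⟩

lemma hasSum_sq_fourierCoeffOn_oddExt (hg : ContinuousOn g (Icc 0 1)) (hg0 : g 0 = 0) :
    HasSum (fun n => ‖coeff (oddExt g) n‖ ^ 2) (∫ x in 0..1, g x ^ 2) := by
  have := hasSum_sq_fourierCoeffOn_of_sq_comp_neg (a := 1) (by norm_num)
    (fun x => by rw [oddExt_neg, neg_sq]) (continuousOn_oddExt hg)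
  have hint : ∫ x in 0..1, oddExt g x ^ 2 = ∫ x in 0..1, g x ^ 2 := by
    refine integral_congr fun x hx => ?_
    rw [uIcc_of_le zero_le_one] at hx
    simp [oddExt_of_nonneg hx.1, hg0]
  rwa [inv_one, one_mul, hint] at this

lemma hasSum_sq_fourierCoeffOn_evenExt (hg : ContinuousOn g (Icc 0 1)) :
    HasSum (fun n => ‖coeff (evenExt g) n‖ ^ 2) (∫ x in 0..1, g x ^ 2) := by
  have := hasSum_sq_fourierCoeffOn_of_sq_comp_neg (a := 1) (by norm_num)
    (fun x => by rw [evenExt_neg]) (continuousOn_evenExt hg)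
  have hint : ∫ x in 0..1, evenExt g x ^ 2 = ∫ x in 0..1, g x ^ 2 := by
    refine integral_congr fun x hx => ?_
    rw [uIcc_of_le zero_le_one] at hx
    simp [evenExt, abs_of_nonneg hx.1]
  rwa [inv_one, one_mul, hint] at this

lemma coeff_deriv_of_eq {F F' : ℝ → ℝ} (hF : ContinuousOn F (Icc (-1) 1))
    (hF' : ContinuousOn F' (Icc (-1) 1))
    (hd : ∀ x ∈ Ioo (-1) 1, HasDerivWithinAt F (F' x) (Ioi x) x) (hper : F (-1) = F 1) (n : ℤ) :
    coeff F' n = π * I * n * coeff F n := by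
  rw [coeff, coeff, fourierCoeffOn_deriv_of_eq (f := fun x => (F x : ℂ)) _
    (continuous_ofReal.comp_continuousOn hF) (fun x hx => (hd x hx).ofReal_comp)
    ((continuous_ofReal.comp_continuousOn hF').intervalIntegrable_of_Icc (by norm_num))
    (by simp [hper])]
  push_cast
  ring

variable (hd : ∀ x ∈ Icc 0 1, HasDerivWithinAt g (g' x) (Icc 0 1) x)
include hd

lemma hasDerivWithinAt_comp_neg (hx : x ∈ Icc (-1) 0) :
    HasDerivWithinAt (fun y => g (-y)) (-g' (-x)) (Icc (-1) 0) x := by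
  have := (hd (-x) ⟨by linarith [hx.2], by linarith [hx.1]⟩).scomp x (hasDerivWithinAt_neg x _)
    fun y (hy : y ∈ Icc (-1) 0) => ⟨by linarith [hy.2], by linarith [hy.1]⟩
  simpa [Function.comp_def] using this

lemma hasDerivWithinAt_oddExt (hx : x ∈ Ioo (-1) 1) :
    HasDerivWithinAt (oddExt g) (evenExt g' x) (Ioi x) x := by
  rcases le_or_gt 0 x with h0 | h0
  · have := ((hd x ⟨h0, hx.2.le⟩).sub_const (g 0)).congr_of_mem
      (fun y hy => oddExt_of_nonneg hy.1) ⟨h0, hx.2.le⟩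
    rw [evenExt, abs_of_nonneg h0]
    exact this.mono_of_mem_nhdsWithin (Icc_mem_nhdsGT_of_mem ⟨h0, hx.2⟩)
  · have := ((hasDerivWithinAt_comp_neg hd ⟨hx.1.le, h0.le⟩).const_sub (g 0)).congr_of_mem
      (fun y hy => oddExt_of_nonpos hy.2) ⟨hx.1.le, h0.le⟩
    rw [evenExt, abs_of_neg h0, ← neg_neg (g' (-x))]
    exact this.mono_of_mem_nhdsWithin (Icc_mem_nhdsGT_of_mem ⟨hx.1.le, h0⟩)

lemma hasDerivWithinAt_evenExt (hg' : g' 0 = 0) (hx : x ∈ Ioo (-1) 1) :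
    HasDerivWithinAt (evenExt g) (oddExt g' x) (Ioi x) x := by
  rcases le_or_gt 0 x with h0 | h0
  · have := (hd x ⟨h0, hx.2.le⟩).congr_of_mem (f₁ := evenExt g)
      (fun y hy => by simp [evenExt, abs_of_nonneg hy.1]) ⟨h0, hx.2.le⟩
    rw [oddExt_of_nonneg h0, hg', sub_zero]
    exact this.mono_of_mem_nhdsWithin (Icc_mem_nhdsGT_of_mem ⟨h0, hx.2⟩)
  · have := (hasDerivWithinAt_comp_neg hd ⟨hx.1.le, h0.le⟩).congr_of_mem (f₁ := evenExt g)
      (fun y hy => by simp [evenExt, abs_of_nonpos hy.2]) ⟨hx.1.le, h0.le⟩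
    rw [oddExt_of_nonpos h0.le, hg', zero_sub]
    exact this.mono_of_mem_nhdsWithin (Icc_mem_nhdsGT_of_mem ⟨hx.1.le, h0⟩)

end Extension

section Beam

variable {g : ℕ → ℝ → ℝ}

lemma betaC_le_mu {k : ℝ} (hk : 0 ≤ k) {n : ℕ} (hn : 1 ≤ n) : betaC k ≤ mu k n := by
  refine csInf_le ⟨0, ?_⟩ ⟨n, hn, rfl⟩
  rintro _ ⟨m, -, rfl⟩
  unfold mu
  positivity

lemma betaC_mul_sq_le {k : ℝ} (hk : 0 ≤ k) (n : ℤ) : betaC k * (π * n) ^ 2 ≤ (π * n) ^ 4 + k := by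
  rcases eq_or_ne n 0 with rfl | hn
  · simpa using hk
  have hpos : 0 < (π * n) ^ 2 := by positivity
  have hmu : mu k n.natAbs * (π * n) ^ 2 = (π * n) ^ 4 + k := by
    rw [mu, Nat.cast_natAbs, Int.cast_abs, sq_abs]
    field_simp
    ring
  rw [← hmu]
  exact mul_le_mul_of_nonneg_right (betaC_le_mu hk (Int.natAbs_pos.2 hn)) hpos.le

theorem exists_hasSum_integral_sq
    (hd : ∀ i < 2, ∀ x ∈ Icc 0 1, HasDerivWithinAt (g i) (g (i + 1) x) (Icc 0 1) x)
    (hc : ContinuousOn (g 2) (Icc 0 1)) (h00 : g 0 0 = 0) (h01 : g 0 1 = 0)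
    (h20 : g 2 0 = 0) :
    ∃ a : ℤ → ℝ, (∀ n, 0 ≤ a n) ∧ HasSum a (∫ x in 0..1, g 0 x ^ 2) ∧
      HasSum (fun n => (π * n) ^ 2 * a n) (∫ x in 0..1, g 1 x ^ 2) ∧
      HasSum (fun n => (π * n) ^ 4 * a n) (∫ x in 0..1, g 2 x ^ 2) := by
  have hc₀ : ContinuousOn (g 0) (Icc 0 1) := fun x hx => (hd 0 two_pos x hx).continuousWithinAt
  have hc₁ : ContinuousOn (g 1) (Icc 0 1) := fun x hx => (hd 1 one_lt_two x hx).continuousWithinAt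
  have hrel₀ (n : ℤ) : coeff (evenExt (g 1)) n = π * I * n * coeff (oddExt (g 0)) n :=
    coeff_deriv_of_eq (continuousOn_oddExt hc₀) (continuousOn_evenExt hc₁)
      (fun x hx => hasDerivWithinAt_oddExt (hd 0 two_pos) hx)
      (by simp [oddExt_of_nonneg, oddExt_of_nonpos, h00, h01]) n
  have hrel₁ (n : ℤ) : coeff (oddExt (g 2)) n = π * I * n * coeff (evenExt (g 1)) n :=
    coeff_deriv_of_eq (continuousOn_evenExt hc₁) (continuousOn_oddExt hc)
      (fun x hx => hasDerivWithinAt_evenExt (hd 1 one_lt_two) h20 hx) (by simp [evenExt]) n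
  refine ⟨fun n => ‖coeff (oddExt (g 0)) n‖ ^ 2, fun n => by positivity,
    hasSum_sq_fourierCoeffOn_oddExt hc₀ h00, ?_, ?_⟩
  · convert hasSum_sq_fourierCoeffOn_evenExt hc₁ using 2 with n
    simp [hrel₀, mul_pow, abs_of_pos pi_pos]
  · convert hasSum_sq_fourierCoeffOn_oddExt hc h20 using 2 with n
    simp [hrel₁, hrel₀, mul_pow, abs_of_pos pi_pos]
    ring

theorem betaC_mul_integral_sq_le {k : ℝ} (hk : 0 ≤ k)
    (hd : ∀ i < 2, ∀ x ∈ Icc 0 1, HasDerivWithinAt (g i) (g (i + 1) x) (Icc 0 1) x)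
    (hc : ContinuousOn (g 2) (Icc 0 1)) (h00 : g 0 0 = 0) (h01 : g 0 1 = 0)
    (h20 : g 2 0 = 0) :
    betaC k * ∫ x in 0..1, g 1 x ^ 2 ≤ (∫ x in 0..1, g 2 x ^ 2) + k * ∫ x in 0..1, g 0 x ^ 2 := by
  obtain ⟨a, ha, h₀, h₁, h₂⟩ := exists_hasSum_integral_sq hd hc h00 h01 h20
  refine hasSum_le (fun n => ?_) (h₁.mul_left (betaC k)) (h₂.add (h₀.mul_left k))
  have := mul_le_mul_of_nonneg_right (betaC_mul_sq_le hk n) (ha n)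
  linarith

theorem integral_sq_add_eq_zero_of_beam {c k : ℝ}
    (hd : ∀ i < 4, ∀ x ∈ Icc 0 1, HasDerivWithinAt (g i) (g (i + 1) x) (Icc 0 1) x)
    (hc : ContinuousOn (g 4) (Icc 0 1)) (h00 : g 0 0 = 0) (h01 : g 0 1 = 0)
    (h20 : g 2 0 = 0) (h21 : g 2 1 = 0)
    (heq : ∀ x ∈ Icc 0 1, g 4 x - c * g 2 x + k * g 0 x = 0) :
    (∫ x in 0..1, g 2 x ^ 2) + c * (∫ x in 0..1, g 1 x ^ 2) + k * ∫ x in 0..1, g 0 x ^ 2 = 0 := by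
  have hcont : ∀ i ≤ 4, ContinuousOn (g i) (Icc 0 1) := by
    intro i hi
    rcases hi.lt_or_eq with hi | rfl
    exacts [fun x hx => (hd i hi x hx).continuousWithinAt, hc]
  have hint (i j : ℕ) (hi : i ≤ 4) (hj : j ≤ 4) :
      IntervalIntegrable (fun x => g i x * g j x) volume 0 1 :=
    ((hcont i hi).mul (hcont j hj)).intervalIntegrable_of_Icc zero_le_one
  have ibp (i j : ℕ) (hi : i < 4) (hj : j < 4) (h0 : g j 0 = 0) (h1 : g j 1 = 0) :
      ∫ x in 0..1, g (i + 1) x * g j x = -∫ x in 0..1, g i x * g (j + 1) x :=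
    integral_deriv_mul_eq_neg_of_eq_zero zero_le_one (hd i hi) (hd j hj) (hcont _ hi) (hcont _ hj)
      h0 h1
  have h₂₀ : ∫ x in 0..1, g 2 x * g 0 x = -∫ x in 0..1, g 1 x * g 1 x :=
    ibp 1 0 (by norm_num) (by norm_num) h00 h01
  have h₄₀ : ∫ x in 0..1, g 4 x * g 0 x = -∫ x in 0..1, g 3 x * g 1 x :=
    ibp 3 0 (by norm_num) (by norm_num) h00 h01
  have h₂₂ : ∫ x in 0..1, g 2 x * g 2 x = -∫ x in 0..1, g 1 x * g 3 x :=
    ibp 1 2 (by norm_num) (by norm_num) h20 h21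
  have hzero : ∫ x in 0..1, (g 4 x - c * g 2 x + k * g 0 x) * g 0 x = 0 := by
    rw [intervalIntegral.integral_congr (g := fun _ => (0 : ℝ)) fun x hx => ?_,
      intervalIntegral.integral_zero]
    rw [uIcc_of_le zero_le_one] at hx
    simp [heq x hx]
  simp_rw [add_mul, sub_mul, mul_assoc] at hzero
  rw [integral_add ((hint 4 0 le_rfl (by norm_num)).sub ((hint 2 0 (by norm_num)
    (by norm_num)).const_mul c)) ((hint 0 0 (by norm_num) (by norm_num)).const_mul k),
    integral_sub (hint 4 0 le_rfl (by norm_num))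
      ((hint 2 0 (by norm_num) (by norm_num)).const_mul c),
    intervalIntegral.integral_const_mul, intervalIntegral.integral_const_mul] at hzero
  rw [h₂₀, h₄₀] at hzero
  simp only [sq, mul_comm (g 3 _)] at hzero ⊢
  linarith

end Beam

end HingedBeam

open HingedBeam

/-- If `β ≥ -β_c(k)`, the only solution of the stationary problem with `f = 0`
is the null solution. -/
theorem stmt0 (k β : ℝ) (hk : 0 < k) (hβ : -betaC k ≤ β)
    (u : ℝ → ℝ) (hu : IsStatSol k β u) :
    ∀ x ∈ Icc (0:ℝ) 1, u x = 0 := by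
  obtain ⟨hreg, heq, h0, h1, h20, h21⟩ := hu
  let g : ℕ → ℝ → ℝ := fun i => iteratedDerivWithin i u (Icc 0 1)
  have hd (i : ℕ) (hi : i < 4) (x : ℝ) (hx : x ∈ Icc (0 : ℝ) 1) :
      HasDerivWithinAt (g i) (g (i + 1) x) (Icc 0 1) x :=
    hreg.hasDerivWithinAt_iteratedDerivWithin (by exact_mod_cast hi) (uniqueDiffOn_Icc one_pos) hx
  have hc (i : ℕ) (hi : i ≤ 4) : ContinuousOn (g i) (Icc 0 1) :=
    hreg.continuousOn_iteratedDerivWithin (by exact_mod_cast hi) (uniqueDiffOn_Icc one_pos)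
  have hg0 : g 0 = u := iteratedDerivWithin_zero
  have heq' : ∀ x ∈ Icc 0 1, g 4 x - (β + ∫ x in 0..1, g 1 x ^ 2) * g 2 x + k * g 0 x = 0 := by
    simpa only [hg0] using heq
  rw [← hg0] at h0 h1 ⊢
  have henergy := integral_sq_add_eq_zero_of_beam hd (hc 4 le_rfl) h0 h1 h20 h21 heq'
  have hspec := betaC_mul_integral_sq_le hk.le (fun i hi => hd i (by omega)) (hc 2 (by norm_num))
    h0 h1 h20
  have hnonneg (i : ℕ) : 0 ≤ ∫ x in 0..1, g i x ^ 2 :=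
    integral_nonneg zero_le_one fun x _ => sq_nonneg _
  have hY : ∫ x in 0..1, g 1 x ^ 2 = 0 := by
    nlinarith [hnonneg 0, hnonneg 1, hnonneg 2, mul_le_mul_of_nonneg_right hβ (hnonneg 1)]
  have hX : ∫ x in 0..1, g 0 x ^ 2 = 0 := by
    rw [hY] at henergy
    refine (mul_eq_zero.1 ?_).resolve_left hk.ne'
    linarith [hnonneg 2, mul_nonneg hk.le (hnonneg 0)]
  exact eq_zero_of_integral_sq_eq_zero one_pos (hc 0 (by norm_num)) hX
end

section
/- Let k > 0, let n ≥ 1 be an integer, and let β ∈ ℝ with β + μ_n(k) < 0. Then the two functions u_n^±(x) = ±(1/(nπ))·√(−2(β + μ_n(k)))·sin(nπx) are nonzero solutions of the stationary beam problem with f = 0. -/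
/-! The mode `u = c sin(nπx)` satisfies the hinged boundary conditions, its even derivatives are
multiples of `u`, and the nonlocal coefficient `∫₀¹ u'² = c²(nπ)²/2` is a constant. The equation
therefore reduces to the algebraic relation `(nπ)⁴ + (β + c²(nπ)²/2)(nπ)² + k = 0`, which
`c² = -2(β + μ_n(k))/(nπ)²` solves; both signs of `c` work. -/

open Real Set

section SineMode

variable (c a : ℝ)

lemma iteratedDeriv_const_mul_sin_mul (m : ℕ) (x : ℝ) :
    iteratedDeriv m (fun x => c * sin (a * x)) x = c * a ^ m * iteratedDeriv m sin (a * x) := by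
  rw [iteratedDeriv_const_mul_field c (fun x => sin (a * x)),
    iteratedDeriv_comp_const_mul contDiff_sin, mul_assoc]

lemma iteratedDerivWithin_const_mul_sin_mul {s : Set ℝ} (hs : UniqueDiffOn ℝ s) (m : ℕ)
    {x : ℝ} (hx : x ∈ s) :
    iteratedDerivWithin m (fun x => c * sin (a * x)) s x
      = c * a ^ m * iteratedDeriv m sin (a * x) := by
  rw [iteratedDerivWithin_eq_iteratedDeriv hs (by fun_prop) hx,
    iteratedDeriv_const_mul_sin_mul]

end SineMode

lemma integral_cos_mul_sq {a : ℝ} (ha : a ≠ 0) (hsin : sin a = 0) :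
    ∫ x in (0:ℝ)..1, cos (a * x) ^ 2 = 1 / 2 := by
  rw [intervalIntegral.integral_comp_mul_left (fun x => cos x ^ 2) ha, integral_cos_sq]
  simp only [mul_one, hsin, mul_zero, cos_zero, sin_zero, sub_self, zero_add, sub_zero, smul_eq_mul,
    one_div]
  field_simp

theorem isStatSol_const_mul_sin_mul {k β c a : ℝ} (ha : a ≠ 0) (hsin : sin a = 0)
    (hdisp : a ^ 4 + (β + c ^ 2 * a ^ 2 / 2) * a ^ 2 + k = 0) :
    IsStatSol k β (fun x => c * sin (a * x)) := by
  have hderiv (m : ℕ) {x : ℝ} (hx : x ∈ Icc (0:ℝ) 1) :=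
    iteratedDerivWithin_const_mul_sin_mul c a (uniqueDiffOn_Icc zero_lt_one) m hx
  have henergy : ∫ ξ in (0:ℝ)..1,
      (iteratedDerivWithin 1 (fun x => c * sin (a * x)) (Icc 0 1) ξ) ^ 2 = c ^ 2 * a ^ 2 / 2 := by
    rw [intervalIntegral.integral_congr (g := fun ξ => (c * a) ^ 2 * cos (a * ξ) ^ 2),
      intervalIntegral.integral_const_mul, integral_cos_mul_sq ha hsin]
    · ring
    · intro ξ hξ
      rw [uIcc_of_le zero_le_one] at hξ
      simp only [hderiv 1 hξ, pow_one, iteratedDeriv_one, Real.deriv_sin]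
      ring
  refine ⟨by fun_prop, fun x hx => ?_, by simp, by simp [hsin], ?_, ?_⟩
  · rw [hderiv 4 hx, hderiv 2 hx, henergy]
    simp only [iteratedDeriv_add_one_sin, iteratedDeriv_add_one_cos, iteratedDeriv_one, deriv_cos',
      Pi.neg_apply, neg_neg, mul_neg, sub_neg_eq_add]
    linear_combination (c * sin (a * x)) * hdisp
  · simp [hderiv 2 (left_mem_Icc.2 zero_le_one)]
  · simp [hderiv 2 (right_mem_Icc.2 zero_le_one), hsin]

lemma exists_mem_Icc_const_mul_sin_ne_zero {n : ℕ} (hn : 1 ≤ n) {c : ℝ} (hc : c ≠ 0) :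
    ∃ x ∈ Icc (0:ℝ) 1, c * sin (n * π * x) ≠ 0 := by
  have hn' : (1 : ℝ) ≤ n := by exact_mod_cast hn
  refine ⟨1 / (2 * n), ⟨by positivity, ?_⟩, ?_⟩
  · rw [div_le_one (by positivity)]
    linarith
  · have : (n : ℝ) * π * (1 / (2 * n)) = π / 2 := by field_simp
    rwa [this, sin_pi_div_two, mul_one]

lemma mu_mul_sq (k : ℝ) {n : ℕ} (hn : n ≠ 0) : mu k n * (n * π) ^ 2 = k + (n * π) ^ 4 := by
  rw [mu]
  field_simp

theorem buckled_mode {k β c : ℝ} {n : ℕ} (hn : 1 ≤ n) (hc : c ≠ 0)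
    (hamp : c ^ 2 * (n * π) ^ 2 = -2 * (β + mu k n)) :
    IsStatSol k β (fun x => c * sin (n * π * x)) ∧ ∃ x ∈ Icc (0:ℝ) 1, c * sin (n * π * x) ≠ 0 := by
  have hn0 : n ≠ 0 := by omega
  refine ⟨isStatSol_const_mul_sin_mul (by positivity) (sin_nat_mul_pi n) ?_,
    exists_mem_Icc_const_mul_sin_ne_zero hn hc⟩
  linear_combination hamp * (n * π) ^ 2 / 2 - mu_mul_sq k hn0

theorem stmt1_general (k : ℝ) (n : ℕ) (hn : 1 ≤ n) (β : ℝ)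
    (hβ : β + mu k n < 0) :
    (IsStatSol k β
        (fun x => (1/((n : ℝ)*π)) * Real.sqrt (-2*(β + mu k n)) * Real.sin ((n : ℝ)*π*x)) ∧
      ∃ x ∈ Icc (0:ℝ) 1,
        (1/((n : ℝ)*π)) * Real.sqrt (-2*(β + mu k n)) * Real.sin ((n : ℝ)*π*x) ≠ 0) ∧
    (IsStatSol k β
        (fun x => -(1/((n : ℝ)*π)) * Real.sqrt (-2*(β + mu k n)) * Real.sin ((n : ℝ)*π*x)) ∧
      ∃ x ∈ Icc (0:ℝ) 1,
        -(1/((n : ℝ)*π)) * Real.sqrt (-2*(β + mu k n)) * Real.sin ((n : ℝ)*π*x) ≠ 0) := by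
  have hpos : 0 < -2 * (β + mu k n) := by linarith
  have hnπ : 0 < (n : ℝ) * π := by positivity
  set c := 1 / ((n : ℝ) * π) * sqrt (-2 * (β + mu k n))
  have hc : c ≠ 0 := by positivity
  have hamp : c ^ 2 * (n * π) ^ 2 = -2 * (β + mu k n) := by
    rw [mul_pow, sq_sqrt hpos.le]
    field_simp
  have hamp_neg : (-c) ^ 2 * (n * π) ^ 2 = -2 * (β + mu k n) := by rwa [neg_sq]
  have hneg : -(1 / ((n : ℝ) * π)) * sqrt (-2 * (β + mu k n)) = -c := neg_mul _ _
  rw [hneg]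
  exact ⟨buckled_mode hn hc hamp, buckled_mode hn (neg_ne_zero.2 hc) hamp_neg⟩

/-- The buckled modes `u_n^± = ±(1/(nπ))√(-2(β+μ_n(k))) sin(nπx)` are nonzero
solutions of the stationary problem whenever `β + μ_n(k) < 0`. -/
theorem stmt1 (k : ℝ) (hk : 0 < k) (n : ℕ) (hn : 1 ≤ n) (β : ℝ)
    (hβ : β + mu k n < 0) :
    (IsStatSol k β
        (fun x => (1/((n : ℝ)*π)) * Real.sqrt (-2*(β + mu k n)) * Real.sin ((n : ℝ)*π*x)) ∧
      ∃ x ∈ Icc (0:ℝ) 1,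
        (1/((n : ℝ)*π)) * Real.sqrt (-2*(β + mu k n)) * Real.sin ((n : ℝ)*π*x) ≠ 0) ∧
    (IsStatSol k β
        (fun x => -(1/((n : ℝ)*π)) * Real.sqrt (-2*(β + mu k n)) * Real.sin ((n : ℝ)*π*x)) ∧
      ∃ x ∈ Icc (0:ℝ) 1,
        -(1/((n : ℝ)*π)) * Real.sqrt (-2*(β + mu k n)) * Real.sin ((n : ℝ)*π*x) ≠ 0) :=
  stmt1_general k n hn β hβ
end

section
/- Let i < j be positive integers, let k = i²j²π⁴, and let β < −(i² + j²)π² (note that μ_i(k) = μ_j(k) = (i² + j²)π²). Then for every pair of reals a, b satisfying (1/2)(a²·i²π² + b²·j²π²) = −β − (i² + j²)π², the function u(x) = a·sin(iπx) + b·sin(jπx) is a solution of the stationary beam problem with f = 0. Consequently, the stationary problem has infinitely many solutions. -/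
/-
With `c = iπ`, `d = jπ` and `u = a sin(cx) + b sin(dx)`, orthogonality of the cosines gives
`∫₀¹ u'² = (a²c² + b²d²)/2`, so the constraint on `(a, b)` makes the nonlocal coefficient
`β + ∫₀¹ u'²` equal to `-(c² + d²)`. Since `k = c²d²`, the equation then reads
`(D² + c²)(D² + d²) u = 0`, which both sine modes satisfy, and they also satisfy the hinged
boundary conditions. For `β < -(c² + d²)` the admissible `(a, b)` form a nondegenerate ellipse,
and distinct coefficients `a` give distinct functions (evaluate at `x = 1/j`), so there are
infinitely many solutions.
-/

open Real Set

theorem iteratedDeriv_two_mul_sin_mul (n : ℕ) (c : ℝ) :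
    iteratedDeriv (2 * n) (fun x => sin (c * x)) = fun x => (-c ^ 2) ^ n * sin (c * x) := by
  rw [iteratedDeriv_comp_const_mul contDiff_sin, iteratedDeriv_even_sin]
  funext x
  simp only [Pi.mul_apply, Pi.pow_apply, Pi.neg_apply, Pi.one_apply, pow_mul, neg_pow (c^2)]
  ring

theorem deriv_sin_comb (a b c d x : ℝ) :
    deriv (fun x => a * sin (c * x) + b * sin (d * x)) x
      = a * c * cos (c * x) + b * d * cos (d * x) := by
  have hc := (((hasDerivAt_id x).const_mul c).sin.const_mul a)
  have hd := (((hasDerivAt_id x).const_mul d).sin.const_mul b)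
  simp only [id, mul_one] at hc hd
  exact (hc.add hd).deriv.trans (by ring)

theorem integral_cos_int_mul_pi_mul (k : ℤ) :
    ∫ x in (0:ℝ)..1, cos (k * π * x) = if k = 0 then 1 else 0 := by
  split_ifs with hk
  · simp [hk]
  · have hkπ : (k * π : ℝ) ≠ 0 := mul_ne_zero (Int.cast_ne_zero.mpr hk) pi_ne_zero
    rw [intervalIntegral.integral_comp_mul_left (fun x => cos x) hkπ, integral_cos]
    simp [sin_int_mul_pi]

theorem integral_cos_mul_cos_int_mul_pi (m n : ℤ) :
    ∫ x in (0:ℝ)..1, cos (m * π * x) * cos (n * π * x)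
      = ((if m = n then 1 else 0) + (if m + n = 0 then 1 else 0)) / 2 := by
  have product_to_sum : ∀ x : ℝ, cos (m * π * x) * cos (n * π * x)
      = (cos (((m - n : ℤ) : ℝ) * π * x) + cos (((m + n : ℤ) : ℝ) * π * x)) / 2 := by
    intro x
    push_cast
    rw [show (m - n : ℝ) * π * x = m * π * x - n * π * x by ring,
      show (m + n : ℝ) * π * x = m * π * x + n * π * x by ring, cos_sub, cos_add]
    ring
  simp_rw [product_to_sum]
  rw [intervalIntegral.integral_div, intervalIntegral.integral_add
    ((by fun_prop : Continuous _).intervalIntegrable _ _)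
    ((by fun_prop : Continuous _).intervalIntegrable _ _),
    integral_cos_int_mul_pi_mul, integral_cos_int_mul_pi_mul]
  simp only [sub_eq_zero]

theorem integral_cos_comb_sq {m n : ℕ} (hm : m ≠ 0) (hn : n ≠ 0) (hmn : m ≠ n) (A B : ℝ) :
    ∫ x in (0:ℝ)..1, (A * cos (m * π * x) + B * cos (n * π * x)) ^ 2
      = (A ^ 2 + B ^ 2) / 2 := by
  have orth (p q : ℕ) := integral_cos_mul_cos_int_mul_pi p q
  push_cast at orth
  have expand : ∀ x : ℝ, (A * cos (m * π * x) + B * cos (n * π * x)) ^ 2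
      = A ^ 2 * (cos (m * π * x) * cos (m * π * x))
        + 2 * A * B * (cos (m * π * x) * cos (n * π * x))
        + B ^ 2 * (cos (n * π * x) * cos (n * π * x)) := fun x => by ring
  have hint (p q : ℕ) (C : ℝ) : IntervalIntegrable
      (fun x : ℝ => C * (cos (p * π * x) * cos (q * π * x))) MeasureTheory.volume 0 1 :=
    (by fun_prop : Continuous _).intervalIntegrable _ _
  simp_rw [expand]
  rw [intervalIntegral.integral_add ((hint _ _ _).add (hint _ _ _)) (hint _ _ _),
    intervalIntegral.integral_add (hint _ _ _) (hint _ _ _),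
    intervalIntegral.integral_const_mul, intervalIntegral.integral_const_mul,
    intervalIntegral.integral_const_mul, orth, orth, orth]
  have hsum : (m : ℤ) + n ≠ 0 := by omega
  simp only [↓reduceIte, add_self_eq_zero, Int.natCast_eq_zero, hm, hn, hmn, hsum, Nat.cast_inj,
    add_zero, zero_div, mul_zero, one_div]
  ring

theorem iteratedDeriv_two_mul_sin_comb (n : ℕ) (a b c d x : ℝ) :
    iteratedDeriv (2 * n) (fun x => a * sin (c * x) + b * sin (d * x)) x
      = (-c ^ 2) ^ n * (a * sin (c * x)) + (-d ^ 2) ^ n * (b * sin (d * x)) := by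
  rw [iteratedDeriv_fun_add (by fun_prop) (by fun_prop), iteratedDeriv_const_mul_field,
    iteratedDeriv_const_mul_field, iteratedDeriv_two_mul_sin_mul, iteratedDeriv_two_mul_sin_mul]
  ring

theorem sin_comb_solves_factored_ode (a b c d x : ℝ) :
    let u := fun x => a * sin (c * x) + b * sin (d * x)
    iteratedDeriv 4 u x + (c ^ 2 + d ^ 2) * iteratedDeriv 2 u x + c ^ 2 * d ^ 2 * u x = 0 := by
  intro u
  rw [show 4 = 2 * 2 from rfl, show 2 = 2 * 1 from rfl, iteratedDeriv_two_mul_sin_comb,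
    iteratedDeriv_two_mul_sin_comb]
  ring

theorem isStatSol_of_contDiff {k β : ℝ} {u : ℝ → ℝ} (hu : ContDiff ℝ 4 u)
    (hode : ∀ x ∈ Icc (0:ℝ) 1, iteratedDeriv 4 u x
      - (β + ∫ ξ in (0:ℝ)..1, deriv u ξ ^ 2) * iteratedDeriv 2 u x + k * u x = 0)
    (h0 : u 0 = 0) (h1 : u 1 = 0)
    (h0'' : iteratedDeriv 2 u 0 = 0) (h1'' : iteratedDeriv 2 u 1 = 0) :
    IsStatSol k β u := by
  have within {n : ℕ} (hn : n ≤ 4) {x : ℝ} (hx : x ∈ Icc (0:ℝ) 1) :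
      iteratedDerivWithin n u (Icc 0 1) x = iteratedDeriv n u x :=
    iteratedDerivWithin_eq_iteratedDeriv (uniqueDiffOn_Icc zero_lt_one)
      (hu.contDiffAt.of_le (by exact_mod_cast hn)) hx
  have energy : ∫ ξ in (0:ℝ)..1, iteratedDerivWithin 1 u (Icc 0 1) ξ ^ 2
      = ∫ ξ in (0:ℝ)..1, deriv u ξ ^ 2 :=
    intervalIntegral.integral_congr fun ξ hξ => by
      rw [within (by norm_num) (by rwa [uIcc_of_le zero_le_one] at hξ), iteratedDeriv_one]
  have h0mem : (0:ℝ) ∈ Icc (0:ℝ) 1 := ⟨le_rfl, zero_le_one⟩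
  have h1mem : (1:ℝ) ∈ Icc (0:ℝ) 1 := ⟨zero_le_one, le_rfl⟩
  refine ⟨hu.contDiffOn, fun x hx => ?_, h0, h1, ?_, ?_⟩
  · rw [within le_rfl hx, within (by norm_num) hx, energy]
    exact hode x hx
  · rwa [within (by norm_num) h0mem]
  · rwa [within (by norm_num) h1mem]

theorem isStatSol_sin_comb {i j : ℕ} (hi : i ≠ 0) (hj : j ≠ 0) (hij : i ≠ j) {β a b : ℝ}
    (hab : (1/2) * (a^2 * (i : ℝ)^2 * π^2 + b^2 * (j : ℝ)^2 * π^2)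
        = -β - ((i : ℝ)^2 + (j : ℝ)^2) * π^2) :
    IsStatSol ((i : ℝ)^2 * (j : ℝ)^2 * π^4) β
      (fun x => a * sin ((i : ℝ)*π*x) + b * sin ((j : ℝ)*π*x)) := by
  have energy :
      β + ∫ ξ in (0:ℝ)..1, deriv (fun x => a * sin (i*π*x) + b * sin (j*π*x)) ξ ^ 2
      = -((i * π) ^ 2 + (j * π) ^ 2) := by
    simp_rw [deriv_sin_comb]
    rw [integral_cos_comb_sq hi hj hij]
    linear_combination hab
  refine isStatSol_of_contDiff (by fun_prop) (fun x _ => ?_) (by simp) (by simp [sin_nat_mul_pi])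
    ?_ ?_
  · rw [energy]
    linear_combination sin_comb_solves_factored_ode a b (i*π) (j*π) x
  · simpa using iteratedDeriv_two_mul_sin_comb 1 a b (i*π) (j*π) 0
  · simpa [sin_nat_mul_pi] using iteratedDeriv_two_mul_sin_comb 1 a b (i*π) (j*π) 1

theorem left_coeff_eq_of_sin_comb_eq {i j : ℕ} (hi : i ≠ 0) (hij : i < j) {a b a' b' : ℝ}
    (h : (fun x => a * sin (i*π*x) + b * sin (j*π*x))
      = fun x => a' * sin (i*π*x) + b' * sin (j*π*x)) : a = a' := by
  have hj : (0:ℝ) < j := by exact_mod_cast hi.bot_lt.trans hij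
  have hsin_j : sin (j * π * (1 / j)) = 0 := by
    rw [show (j:ℝ) * π * (1 / j) = π by field_simp, sin_pi]
  have hsin_i : 0 < sin (i * π * (1 / j)) := by
    apply sin_pos_of_pos_of_lt_pi
    · have : (0:ℝ) < i := by exact_mod_cast hi.bot_lt
      positivity
    · rw [show (i:ℝ) * π * (1 / j) = i / j * π by ring]
      exact mul_lt_of_lt_one_left pi_pos ((div_lt_one hj).2 (by exact_mod_cast hij))
  have := congrFun h (1 / j)
  simp only [hsin_j, mul_zero, add_zero] at this
  exact mul_right_cancel₀ hsin_i.ne' this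

/-- At a resonant value `k = i²j²π⁴` with `β < -(i²+j²)π²`, every function
`a sin(iπx) + b sin(jπx)` with `(1/2)(a²i²π² + b²j²π²) = -β - (i²+j²)π²` is a
stationary solution; hence there are infinitely many solutions. -/
theorem stmt3 (i j : ℕ) (hi : 1 ≤ i) (hij : i < j) (β : ℝ)
    (hβ : β < -(((i : ℝ)^2 + (j : ℝ)^2) * π^2)) :
    (∀ a b : ℝ,
      (1/2) * (a^2 * (i : ℝ)^2 * π^2 + b^2 * (j : ℝ)^2 * π^2)
          = -β - ((i : ℝ)^2 + (j : ℝ)^2) * π^2 →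
      IsStatSol ((i : ℝ)^2 * (j : ℝ)^2 * π^4) β
        (fun x => a * Real.sin ((i : ℝ)*π*x) + b * Real.sin ((j : ℝ)*π*x))) ∧
    {u : ℝ → ℝ | IsStatSol ((i : ℝ)^2 * (j : ℝ)^2 * π^4) β u}.Infinite := by
  have hi0 : i ≠ 0 := by omega
  have hi' : (i : ℝ) ≠ 0 := by exact_mod_cast hi0
  have hj' : (j : ℝ) ≠ 0 := by exact_mod_cast (by omega : j ≠ 0)
  refine ⟨fun a b hab => isStatSol_sin_comb hi0 (by omega) hij.ne hab, ?_⟩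
  -- parametrise the ellipse of admissible `(a, b)` by `θ ∈ [0, π]`, where `cos` is injective
  set r := √(2 * (-β - ((i : ℝ)^2 + (j : ℝ)^2) * π^2))
  have hr : r ^ 2 = 2 * (-β - ((i : ℝ)^2 + (j : ℝ)^2) * π^2) := sq_sqrt (by linarith)
  have hr0 : 0 < r := sqrt_pos.2 (by linarith)
  let F : ℝ → ℝ → ℝ := fun θ x =>
    r * cos θ / (i * π) * sin (i * π * x) + r * sin θ / (j * π) * sin (j * π * x)
  have hF : MapsTo F (Icc 0 π) {u | IsStatSol ((i : ℝ)^2 * (j : ℝ)^2 * π^4) β u} :=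
    fun θ _ => isStatSol_sin_comb hi0 (by omega) hij.ne (by
      field_simp
      linear_combination r ^ 2 * cos_sq_add_sin_sq θ + hr)
  have hinj : InjOn F (Icc 0 π) := fun θ hθ θ' hθ' h => by
    have := left_coeff_eq_of_sin_comb_eq hi0 hij h
    field_simp at this
    exact injOn_cos hθ hθ' this
  exact ((Icc_infinite pi_pos).image hinj).mono hF.image_subset
end

section
/- Let ε > 0 and c₀ ≥ 0. Let φ : [0,∞) → [0,∞) be differentiable and g : [0,∞) → [0,∞) be locally integrable, and suppose that φ'(t) + 2ε·φ(t) ≤ g(t)·φ(t) for all t ≥ 0, and that ∫_τ^t g(y) dy ≤ c₀ + ε·(t − τ) for all 0 ≤ τ ≤ t. Then there exists c₁ ≥ 0 (one may take c₁ = e^{c₀}) such that φ(t) ≤ c₁·φ(0)·e^{−εt} for all t ≥ 0. -/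
/-!
With `ψ t = φ t * exp (2 * ε * t)` the hypothesis becomes `ψ' ≤ g * ψ`, so Gronwall's inequality
gives `ψ t ≤ ψ 0 * exp (∫₀ᵗ g) ≤ φ 0 * exp (c₀ + ε * t)`.

Since `g` is merely integrable, its primitive `G` is only absolutely continuous, and Gronwall's
inequality is proved without differentiating `ψ * exp (-G)`: at a maximum point `u` of
`ψ * exp (-G)` on `[a, b]`, with maximal value `K`, one has `ψ ≤ K * exp G`, and integrating
`ψ' ≤ g * ψ ≤ K * g * exp G` over `[a, u]` with the chain rule `∫ g * exp G = exp G - 1`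
(valid for the absolutely continuous function `exp ∘ G`) yields `K ≤ ψ a`.
-/

open Real Set MeasureTheory Filter

theorem LipschitzOnWith.comp_absolutelyContinuousOnInterval {X Y : Type*} [PseudoMetricSpace X]
    [PseudoMetricSpace Y] {f : ℝ → X} {h : X → Y} {K : NNReal} {a b : ℝ}
    (hh : LipschitzOnWith K h (f '' uIcc a b)) (hf : AbsolutelyContinuousOnInterval f a b) :
    AbsolutelyContinuousOnInterval (h ∘ f) a b := by
  have hK := Tendsto.const_mul (K : ℝ) (show Tendsto _ _ _ from hf)
  rw [mul_zero] at hK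
  refine squeeze_zero' (Eventually.of_forall fun _ ↦ Finset.sum_nonneg fun _ _ ↦ dist_nonneg) ?_ hK
  filter_upwards [mem_inf_of_right (mem_principal_self _)] with E hE
  rw [Finset.mul_sum]
  refine Finset.sum_le_sum fun i hi ↦ hh.dist_le_mul _ ?_ _ ?_
  · exact mem_image_of_mem f (hE.1 i hi).1
  · exact mem_image_of_mem f (hE.1 i hi).2

theorem LocallyLipschitz.comp_absolutelyContinuousOnInterval {E Y : Type*}
    [SeminormedAddCommGroup E] [PseudoMetricSpace Y] {f : ℝ → E} {h : E → Y} {a b : ℝ}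
    (hh : LocallyLipschitz h) (hf : AbsolutelyContinuousOnInterval f a b) :
    AbsolutelyContinuousOnInterval (h ∘ f) a b := by
  obtain ⟨K, hK⟩ := hh.locallyLipschitzOn.exists_lipschitzOnWith_of_compact
    (isCompact_uIcc.image_of_continuousOn hf.continuousOn)
  exact hK.comp_absolutelyContinuousOnInterval hf

theorem IntervalIntegrable.integral_mul_exp_integral {g : ℝ → ℝ} {a b : ℝ}
    (hg : IntervalIntegrable g volume a b) :
    ∫ x in a..b, g x * exp (∫ t in a..x, g t) = exp (∫ t in a..b, g t) - 1 := by
  have hexpG := contDiff_exp.locallyLipschitz.comp_absolutelyContinuousOnInterval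
    (hg.absolutelyContinuousOnInterval_intervalIntegral left_mem_uIcc)
  have := hexpG.integral_deriv_eq_sub
  simp only [Function.comp_apply, intervalIntegral.integral_same, exp_zero] at this
  rw [← this]
  refine intervalIntegral.integral_congr_ae ?_
  filter_upwards [hg.ae_hasDerivAt_integral] with x hx hxab
  have hx' := uIoc_subset_uIcc hxab
  exact ((hx hx' a left_mem_uIcc).exp.deriv.trans (mul_comm _ _)).symm

theorem le_mul_exp_integral_of_sub_le_integral {ψ g : ℝ → ℝ} {a b : ℝ} (hab : a ≤ b)
    (hψ : ContinuousOn ψ (Icc a b)) (hg : IntervalIntegrable g volume a b)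
    (hg0 : ∀ x ∈ Icc a b, 0 ≤ g x) (hle : ∀ u ∈ Icc a b, ψ u - ψ a ≤ ∫ x in a..u, g x * ψ x) :
    ψ b ≤ ψ a * exp (∫ x in a..b, g x) := by
  set G := fun x ↦ ∫ t in a..x, g t
  have hG : ContinuousOn G (Icc a b) := by
    simpa [uIcc_of_le hab] using intervalIntegral.continuousOn_primitive_interval' hg left_mem_uIcc
  obtain ⟨u, hu, hmax⟩ := isCompact_Icc.exists_isMaxOn (nonempty_Icc.2 hab)
    (hψ.mul (continuous_exp.comp_continuousOn hG.neg))
  set K := ψ u * exp (-G u)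
  have hψK : ∀ x ∈ Icc a b, ψ x ≤ K * exp (G x) := fun x hx ↦ by
    have h : ψ x = ψ x * exp (-G x) * exp (G x) := by
      rw [mul_assoc, ← exp_add, neg_add_cancel, exp_zero, mul_one]
    rw [h]
    exact mul_le_mul_of_nonneg_right (hmax hx) (exp_pos _).le
  have hψu : ψ u = K * exp (G u) := by
    rw [mul_assoc, ← exp_add, neg_add_cancel, exp_zero, mul_one]
  have hau : Icc a u ⊆ Icc a b := Icc_subset_Icc_right hu.2
  have hau' : uIcc a u ⊆ Icc a b := by rwa [uIcc_of_le hu.1]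
  have hgu : IntervalIntegrable g volume a u := hg.mono_set (by rwa [uIcc_of_le hab])
  have hKa : K ≤ ψ a := by
    have hint := calc ψ u - ψ a ≤ ∫ x in a..u, g x * ψ x := hle u hu
      _ ≤ ∫ x in a..u, K * (g x * exp (G x)) := by
        refine intervalIntegral.integral_mono_on hu.1 (hgu.mul_continuousOn (hψ.mono hau'))
          ((hgu.mul_continuousOn (continuous_exp.comp_continuousOn (hG.mono hau'))).const_mul K)
          fun x hx ↦ ?_
        rw [mul_left_comm]
        exact mul_le_mul_of_nonneg_left (hψK x (hau hx)) (hg0 x (hau hx))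
      _ = K * exp (G u) - K := by
        rw [intervalIntegral.integral_const_mul, hgu.integral_mul_exp_integral, mul_sub, mul_one]
    linarith
  calc ψ b ≤ K * exp (G b) := hψK b (right_mem_Icc.2 hab)
    _ ≤ ψ a * exp (G b) := mul_le_mul_of_nonneg_right hKa (exp_pos _).le

theorem le_mul_exp_integral_of_deriv_right_le {ψ ψ' g : ℝ → ℝ} {a b : ℝ} (hab : a ≤ b)
    (hψ : ContinuousOn ψ (Icc a b)) (hψ' : ∀ x ∈ Ioo a b, HasDerivWithinAt ψ (ψ' x) (Ioi x) x)
    (hg : IntervalIntegrable g volume a b) (hg0 : ∀ x ∈ Icc a b, 0 ≤ g x)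
    (hle : ∀ x ∈ Ioo a b, ψ' x ≤ g x * ψ x) :
    ψ b ≤ ψ a * exp (∫ x in a..b, g x) := by
  refine le_mul_exp_integral_of_sub_le_integral hab hψ hg hg0 fun u hu ↦ ?_
  have hau : Icc a u ⊆ Icc a b := Icc_subset_Icc_right hu.2
  have hgu : IntervalIntegrable g volume a u := hg.mono_set (by
    rw [uIcc_of_le hab, uIcc_of_le hu.1]; exact hau)
  refine intervalIntegral.sub_le_integral_of_hasDeriv_right_of_le hu.1 (hψ.mono hau)
    (fun x hx ↦ hψ' x ⟨hx.1, hx.2.trans_le hu.2⟩) ?_ (fun x hx ↦ hle x ⟨hx.1, hx.2.trans_le hu.2⟩)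
  rw [← intervalIntegrable_iff_integrableOn_Icc_of_le hu.1]
  exact hgu.mul_continuousOn (by rw [uIcc_of_le hu.1]; exact hψ.mono hau)

theorem stmt10_general (ε c₀ : ℝ)
    (φ φ' g : ℝ → ℝ)
    (hφnonneg : ∀ t ∈ Ici (0:ℝ), 0 ≤ φ t)
    (hgnonneg : ∀ t ∈ Ici (0:ℝ), 0 ≤ g t)
    (hφdiff : ∀ t ∈ Ici (0:ℝ), HasDerivWithinAt φ (φ' t) (Ici (0:ℝ)) t)
    (hgint : LocallyIntegrableOn g (Ici (0:ℝ)))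
    (hineq : ∀ t ∈ Ici (0:ℝ), φ' t + 2*ε*φ t ≤ g t * φ t)
    (hgbound : ∀ τ t : ℝ, 0 ≤ τ → τ ≤ t → (∫ y in τ..t, g y) ≤ c₀ + ε*(t - τ)) :
    ∃ c₁ : ℝ, 0 ≤ c₁ ∧ ∀ t ∈ Ici (0:ℝ), φ t ≤ c₁ * φ 0 * Real.exp (-ε*t) := by
  refine ⟨exp c₀, (exp_pos _).le, fun t (ht : 0 ≤ t) ↦ ?_⟩
  have hφψ : ∀ s ∈ Ici (0:ℝ), HasDerivWithinAt (fun s ↦ φ s * exp (2 * ε * s))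
      ((φ' s + 2 * ε * φ s) * exp (2 * ε * s)) (Ici 0) s := fun s hs ↦ by
    refine ((hφdiff s hs).fun_mul
      (((hasDerivAt_id' s).const_mul (2 * ε)).exp.hasDerivWithinAt)).congr_deriv ?_
    ring
  have hg : IntervalIntegrable g volume 0 t :=
    (intervalIntegrable_iff_integrableOn_Icc_of_le ht).2
      (hgint.integrableOn_compact_subset Icc_subset_Ici_self isCompact_Icc)
  have hgronwall := le_mul_exp_integral_of_deriv_right_le ht
    (fun s hs ↦ (hφψ s hs.1).continuousWithinAt.mono Icc_subset_Ici_self)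
    (fun s hs ↦ (hφψ s hs.1.le).mono (Ioi_subset_Ici hs.1.le)) hg
    (fun s hs ↦ hgnonneg s hs.1)
    (fun s hs ↦ by
      rw [← mul_assoc]
      exact mul_le_mul_of_nonneg_right (hineq s hs.1.le) (exp_pos _).le)
  simp only [mul_zero, exp_zero, mul_one] at hgronwall
  have hψ_le : φ t * exp (2 * ε * t) ≤ φ 0 * exp (c₀ + ε * t) := by
    refine hgronwall.trans (mul_le_mul_of_nonneg_left ?_ (hφnonneg 0 self_mem_Ici))
    simpa using hgbound 0 t le_rfl ht
  calc φ t = φ t * exp (2 * ε * t) * exp (-(2 * ε * t)) := by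
        rw [mul_assoc, ← exp_add, add_neg_cancel, exp_zero, mul_one]
    _ ≤ φ 0 * exp (c₀ + ε * t) * exp (-(2 * ε * t)) :=
        mul_le_mul_of_nonneg_right hψ_le (exp_pos _).le
    _ = exp c₀ * φ 0 * exp (-ε * t) := by
        rw [mul_assoc, ← exp_add, show c₀ + ε * t + -(2 * ε * t) = c₀ + -ε * t by ring, exp_add]
        ring

/-- Gronwall-type lemma: if `φ' + 2εφ ≤ gφ` on `[0,∞)` and
`∫_τ^t g ≤ c₀ + ε(t-τ)`, then `φ(t) ≤ c₁ φ(0) e^{-εt}` for some `c₁ ≥ 0`. -/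
theorem stmt10 (ε c₀ : ℝ) (hε : 0 < ε) (hc₀ : 0 ≤ c₀)
    (φ φ' g : ℝ → ℝ)
    (hφnonneg : ∀ t ∈ Ici (0:ℝ), 0 ≤ φ t)
    (hgnonneg : ∀ t ∈ Ici (0:ℝ), 0 ≤ g t)
    (hφdiff : ∀ t ∈ Ici (0:ℝ), HasDerivWithinAt φ (φ' t) (Ici (0:ℝ)) t)
    (hgint : LocallyIntegrableOn g (Ici (0:ℝ)))
    (hineq : ∀ t ∈ Ici (0:ℝ), φ' t + 2*ε*φ t ≤ g t * φ t)
    (hgbound : ∀ τ t : ℝ, 0 ≤ τ → τ ≤ t → (∫ y in τ..t, g y) ≤ c₀ + ε*(t - τ)) :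
    ∃ c₁ : ℝ, 0 ≤ c₁ ∧ ∀ t ∈ Ici (0:ℝ), φ t ≤ c₁ * φ 0 * Real.exp (-ε*t) :=
  stmt10_general ε c₀ φ φ' g hφnonneg hgnonneg hφdiff hgint hineq hgbound
end

section
/- Let u be a classical solution of the beam equation, and define F(t) = E(t) + (1/2)·(β + ‖∂ₓu(·,t)‖²)² + k·‖u(·,t)‖² − 2·∫₀¹ f(x)·u(x,t) dx. Then F is differentiable on [0,∞) with F'(t) = −2δ·‖∂ₜu(·,t)‖² for every t ≥ 0; in particular F is nonincreasing. -/
open Real Set MeasureTheory Filter Metric Topology intervalIntegral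

noncomputable def P1 (U : ℝ × ℝ → ℝ) (p : ℝ × ℝ) : ℝ := fderiv ℝ U p (1, 0)
noncomputable def P2 (U : ℝ × ℝ → ℝ) (p : ℝ × ℝ) : ℝ := fderiv ℝ U p (0, 1)

lemma smooth_fderiv_apply {U : ℝ × ℝ → ℝ} (hU : ContDiff ℝ (⊤ : ℕ∞) U) (v : ℝ × ℝ) :
    ContDiff ℝ (⊤ : ℕ∞) (fun p => fderiv ℝ U p v) :=
  (hU.fderiv_right (m := (⊤:ℕ∞)) (by exact_mod_cast le_rfl)).clm_apply contDiff_const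

lemma smooth_P1 {U : ℝ × ℝ → ℝ} (hU : ContDiff ℝ (⊤ : ℕ∞) U) : ContDiff ℝ (⊤ : ℕ∞) (P1 U) :=
  smooth_fderiv_apply hU _

lemma smooth_P2 {U : ℝ × ℝ → ℝ} (hU : ContDiff ℝ (⊤ : ℕ∞) U) : ContDiff ℝ (⊤ : ℕ∞) (P2 U) :=
  smooth_fderiv_apply hU _

lemma slice1 {U : ℝ × ℝ → ℝ} (hU : Differentiable ℝ U) (x t : ℝ) :
    HasDerivAt (fun y => U (y, t)) (P1 U (x, t)) x :=
  (hU (x, t)).hasFDerivAt.comp_hasDerivAt x (HasDerivAt.prodMk (hasDerivAt_id x) (hasDerivAt_const x t))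

lemma slice2 {U : ℝ × ℝ → ℝ} (hU : Differentiable ℝ U) (x t : ℝ) :
    HasDerivAt (fun s => U (x, s)) (P2 U (x, t)) t :=
  (hU (x, t)).hasFDerivAt.comp_hasDerivAt t (HasDerivAt.prodMk (hasDerivAt_const t x) (hasDerivAt_id t))

lemma deriv_slice1 {U : ℝ × ℝ → ℝ} (hU : Differentiable ℝ U) (t : ℝ) :
    (deriv fun y => U (y, t)) = fun x => P1 U (x, t) :=
  funext fun x => (slice1 hU x t).deriv

lemma deriv_slice2 {U : ℝ × ℝ → ℝ} (hU : Differentiable ℝ U) (x : ℝ) :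
    (deriv fun s => U (x, s)) = fun t => P2 U (x, t) :=
  funext fun t => (slice2 hU x t).deriv

lemma swapP {U : ℝ × ℝ → ℝ} (hU : ContDiff ℝ (⊤ : ℕ∞) U) (p : ℝ × ℝ) :
    P1 (P2 U) p = P2 (P1 U) p := by
  have hd : ∀ q, HasFDerivAt U (fderiv ℝ U q) q := fun q =>
    (hU.differentiable (by simp) q).hasFDerivAt
  have hd2 : DifferentiableAt ℝ (fderiv ℝ U) p :=
    (((hU.fderiv_right (m := (⊤:ℕ∞)) (by exact_mod_cast le_rfl))).differentiable
      (by simp) p)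
  have hsymm := second_derivative_symmetric hd hd2.hasFDerivAt (0, 1) (1, 0)
  show fderiv ℝ (fun q => fderiv ℝ U q (0,1)) p (1,0)
      = fderiv ℝ (fun q => fderiv ℝ U q (1,0)) p (0,1)
  rw [fderiv_clm_apply hd2 (differentiableAt_const _),
      fderiv_clm_apply hd2 (differentiableAt_const _)]
  simp [hsymm]

lemma hasDerivAt_parametric {g dg : ℝ × ℝ → ℝ} {t0 : ℝ}
    (hc : ∀ t ∈ ball t0 1, ContinuousOn (fun x => g (x, t)) (Icc 0 1))
    (hdc : ContinuousOn dg ((Icc 0 1) ×ˢ (Icc (t0 - 1) (t0 + 1))))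
    (hd : ∀ x ∈ Icc (0:ℝ) 1, ∀ t ∈ ball t0 1, HasDerivAt (fun s => g (x, s)) (dg (x, t)) t) :
    HasDerivAt (fun t => ∫ x in (0:ℝ)..1, g (x, t)) (∫ x in (0:ℝ)..1, dg (x, t0)) t0 := by
  obtain ⟨C, hC⟩ := (isCompact_Icc.prod isCompact_Icc).exists_bound_of_continuousOn hdc
  have hball : ball t0 1 ⊆ Icc (t0 - 1) (t0 + 1) := by
    intro s hs
    rw [Real.ball_eq_Ioo] at hs
    exact Ioo_subset_Icc_self hs
  have hsub : uIoc (0:ℝ) 1 ⊆ Icc 0 1 := by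
    rw [uIoc_of_le zero_le_one]; exact Ioc_subset_Icc_self
  have ht0 : t0 ∈ ball t0 1 := mem_ball_self one_pos
  have ht0' : t0 ∈ Icc (t0 - 1) (t0 + 1) := ⟨by linarith, by linarith⟩
  have hdgc : ContinuousOn (fun x => dg (x, t0)) (Icc 0 1) :=
    hdc.comp (continuous_id.prodMk continuous_const).continuousOn
      (fun x hx => ⟨hx, ht0'⟩)
  have key := intervalIntegral.hasDerivAt_integral_of_dominated_loc_of_deriv_le
    (F := fun t x => g (x, t)) (F' := fun t x => dg (x, t)) (x₀ := t0)
    (bound := fun _ => C) (μ := volume) (a := 0) (b := 1) (ball_mem_nhds t0 one_pos)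
    (by
      filter_upwards [ball_mem_nhds t0 one_pos] with t ht
      exact ((hc t ht).mono hsub).aestronglyMeasurable measurableSet_uIoc)
    (((hc t0 ht0).mono (uIcc_of_le zero_le_one).subset).intervalIntegrable)
    ((hdgc.mono hsub).aestronglyMeasurable measurableSet_uIoc)
    (Eventually.of_forall fun x hx t ht => hC (x, t) ⟨hsub hx, hball ht⟩)
    (intervalIntegrable_const)
    (Eventually.of_forall fun x hx t ht => hd x (hsub hx) t ht)
  exact key.2

lemma ibp {a b a' b' : ℝ → ℝ}
    (ha : ∀ x ∈ uIcc (0:ℝ) 1, HasDerivAt a (a' x) x)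
    (hb : ∀ x ∈ uIcc (0:ℝ) 1, HasDerivAt b (b' x) x)
    (hac : Continuous a) (hbc : Continuous b) (ha' : Continuous a') (hb' : Continuous b')
    (h0 : a 0 * b 0 = 0) (h1 : a 1 * b 1 = 0) :
    ∫ x in (0:ℝ)..1, a x * b' x = - ∫ x in (0:ℝ)..1, a' x * b x := by
  have h := intervalIntegral.integral_deriv_mul_eq_sub ha hb
      (ha'.intervalIntegrable 0 1) (hb'.intervalIntegrable 0 1)
  rw [intervalIntegral.integral_add (f := fun x => a' x * b x) (g := fun x => a x * b' x) ((ha'.mul hbc).intervalIntegrable 0 1)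
      ((hac.mul hb').intervalIntegrable 0 1), h0, h1] at h
  linarith


/-- spatial derivative `∂ₓu(x,t)`. -/
noncomputable def ux (u : ℝ → ℝ → ℝ) (x t : ℝ) : ℝ := deriv (fun y => u y t) x

/-- second spatial derivative `∂ₓₓu(x,t)`. -/
noncomputable def uxx (u : ℝ → ℝ → ℝ) (x t : ℝ) : ℝ := iteratedDeriv 2 (fun y => u y t) x

/-- fourth spatial derivative `∂ₓₓₓₓu(x,t)`. -/
noncomputable def uxxxx (u : ℝ → ℝ → ℝ) (x t : ℝ) : ℝ := iteratedDeriv 4 (fun y => u y t) x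

/-- time derivative `∂ₜu(x,t)`. -/
noncomputable def ut (u : ℝ → ℝ → ℝ) (x t : ℝ) : ℝ := deriv (fun s => u x s) t

/-- second time derivative `∂ₜₜu(x,t)`. -/
noncomputable def utt (u : ℝ → ℝ → ℝ) (x t : ℝ) : ℝ := iteratedDeriv 2 (fun s => u x s) t

/-- `u` is a classical (smooth) solution of the beam equation
`∂ₜₜu + ∂ₓₓₓₓu - (β + ∫₀¹ (∂ₓu)² dξ) ∂ₓₓu = -ku - δ∂ₜu + f` on `[0,1] × [0,∞)`
with hinged boundary conditions. -/
def IsBeamSol (k δ β : ℝ) (f : ℝ → ℝ) (u : ℝ → ℝ → ℝ) : Prop :=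
  ContDiff ℝ (⊤ : ℕ∞) (fun p : ℝ × ℝ => u p.1 p.2) ∧
  (∀ x ∈ Icc (0:ℝ) 1, ∀ t ∈ Ici (0:ℝ),
    utt u x t + uxxxx u x t
      - (β + ∫ ξ in (0:ℝ)..1, (ux u ξ t)^2) * uxx u x t
      = -k * u x t - δ * ut u x t + f x) ∧
  (∀ t ∈ Ici (0:ℝ), u 0 t = 0 ∧ u 1 t = 0 ∧ uxx u 0 t = 0 ∧ uxx u 1 t = 0)

/-- (Twice the) energy: `E(t) = ‖∂ₓₓu(·,t)‖² + ‖∂ₜu(·,t)‖²` in `L²(0,1)`. -/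
noncomputable def beamEnergy (u : ℝ → ℝ → ℝ) (t : ℝ) : ℝ :=
  (∫ x in (0:ℝ)..1, (uxx u x t)^2) + ∫ x in (0:ℝ)..1, (ut u x t)^2

/-- The Lyapunov functional `F`. -/
noncomputable def Ffun (k β : ℝ) (f : ℝ → ℝ) (u : ℝ → ℝ → ℝ) (t : ℝ) : ℝ :=
  beamEnergy u t + (1/2) * (β + ∫ x in (0:ℝ)..1, (ux u x t)^2)^2
    + k * (∫ x in (0:ℝ)..1, (u x t)^2)
    - 2 * ∫ x in (0:ℝ)..1, f x * u x t

/-- Along classical solutions, `F' = -2δ ‖∂ₜu‖²`; in particular `F` is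
nonincreasing on `[0,∞)`. -/
theorem stmt11 (k δ β : ℝ) (hk : 0 < k) (hδ : 0 < δ)
    (f : ℝ → ℝ) (hf : ContinuousOn f (Icc (0:ℝ) 1))
    (u : ℝ → ℝ → ℝ) (hu : IsBeamSol k δ β f u) :
    (∀ t ∈ Ici (0:ℝ),
      HasDerivWithinAt (Ffun k β f u)
        (-2 * δ * ∫ x in (0:ℝ)..1, (ut u x t)^2) (Ici (0:ℝ)) t) ∧
    AntitoneOn (Ffun k β f u) (Ici (0:ℝ)) := by
  obtain ⟨hU0, hpde, hbc⟩ := hu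
  set U : ℝ × ℝ → ℝ := fun p => u p.1 p.2 with hUdef
  have hU : ContDiff ℝ (⊤:ℕ∞) U := hU0.of_le (by simp)
  have hUd : Differentiable ℝ U := hU.differentiable (by simp)
  have hW1s : ContDiff ℝ (⊤:ℕ∞) (P1 U) := smooth_P1 hU
  have hW2s : ContDiff ℝ (⊤:ℕ∞) (P1 (P1 U)) := smooth_P1 hW1s
  have hW3s : ContDiff ℝ (⊤:ℕ∞) (P1 (P1 (P1 U))) := smooth_P1 hW2s
  have hW4s : ContDiff ℝ (⊤:ℕ∞) (P1 (P1 (P1 (P1 U)))) := smooth_P1 hW3s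
  have hVs : ContDiff ℝ (⊤:ℕ∞) (P2 U) := smooth_P2 hU
  have hPVs : ContDiff ℝ (⊤:ℕ∞) (P1 (P2 U)) := smooth_P1 hVs
  have hPPVs : ContDiff ℝ (⊤:ℕ∞) (P1 (P1 (P2 U))) := smooth_P1 hPVs
  have hdiff : ∀ {W : ℝ × ℝ → ℝ}, ContDiff ℝ (⊤:ℕ∞) W → Differentiable ℝ W :=
    fun h => h.differentiable (by simp)
  have sliceC : ∀ (W : ℝ × ℝ → ℝ), Continuous W → ∀ t : ℝ, Continuous (fun x => W (x, t)) :=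
    fun W hW t => hW.comp (continuous_id.prodMk continuous_const)
  -- translation of the `u`-language derivatives into the `P`-language
  have eU : ∀ x t : ℝ, u x t = U (x, t) := fun _ _ => rfl
  have eux : ∀ x t : ℝ, ux u x t = P1 U (x, t) := fun x t => (slice1 hUd x t).deriv
  have eut : ∀ x t : ℝ, ut u x t = P2 U (x, t) := fun x t => (slice2 hUd x t).deriv
  have euxx : ∀ x t : ℝ, uxx u x t = P1 (P1 U) (x, t) := by
    intro x t
    show iteratedDeriv 2 (fun y => U (y, t)) x = P1 (P1 U) (x, t)
    rw [iteratedDeriv_succ, iteratedDeriv_one, deriv_slice1 hUd t]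
    exact (slice1 (hdiff hW1s) x t).deriv
  have euxxxx : ∀ x t : ℝ, uxxxx u x t = P1 (P1 (P1 (P1 U))) (x, t) := by
    intro x t
    show iteratedDeriv 4 (fun y => U (y, t)) x = P1 (P1 (P1 (P1 U))) (x, t)
    rw [iteratedDeriv_succ, iteratedDeriv_succ, iteratedDeriv_succ, iteratedDeriv_one,
        deriv_slice1 hUd t, deriv_slice1 (hdiff hW1s) t, deriv_slice1 (hdiff hW2s) t]
    exact (slice1 (hdiff hW3s) x t).deriv
  have eutt : ∀ x t : ℝ, utt u x t = P2 (P2 U) (x, t) := by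
    intro x t
    show iteratedDeriv 2 (fun s => U (x, s)) t = P2 (P2 U) (x, t)
    rw [iteratedDeriv_succ, iteratedDeriv_one, deriv_slice2 hUd x]
    exact (slice2 (hdiff hVs) x t).deriv
  -- swap lemmas
  have sw1 : ∀ p : ℝ × ℝ, P2 (P1 U) p = P1 (P2 U) p := fun p => (swapP hU p).symm
  have sw1' : P2 (P1 U) = P1 (P2 U) := funext sw1
  have sw2 : ∀ p : ℝ × ℝ, P2 (P1 (P1 U)) p = P1 (P1 (P2 U)) p := by
    intro p
    calc P2 (P1 (P1 U)) p = P1 (P2 (P1 U)) p := (swapP hW1s p).symm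
      _ = P1 (P1 (P2 U)) p := by rw [sw1']
  -- boundary values of `∂ₜu` vanish at the endpoints for t ≥ 0
  have hbV : ∀ z : ℝ, (∀ s ∈ Ici (0:ℝ), U (z, s) = 0) → ∀ t ∈ Ici (0:ℝ), P2 U (z, t) = 0 := by
    intro z hz t ht
    have h1 := (slice2 hUd z t).hasDerivWithinAt (s := Ici t)
    have h2 : HasDerivWithinAt (fun s => U (z, s)) 0 (Ici t) t :=
      (hasDerivWithinAt_const t (Ici t) (0:ℝ)).congr
        (fun s hs => hz s (mem_Ici.mpr (le_trans ht hs))) (hz t ht)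
    rw [← h1.derivWithin (uniqueDiffOn_Ici t t self_mem_Ici),
        h2.derivWithin (uniqueDiffOn_Ici t t self_mem_Ici)]
  -- derivative of ∫ W² under the integral sign
  have hsq : ∀ (W : ℝ × ℝ → ℝ), ContDiff ℝ (⊤:ℕ∞) W → ∀ t0 : ℝ,
      HasDerivAt (fun t => ∫ x in (0:ℝ)..1, (W (x, t))^2)
        (∫ x in (0:ℝ)..1, 2 * (W (x, t0) * P2 W (x, t0))) t0 := by
    intro W hW t0
    apply hasDerivAt_parametric (g := fun p => (W p)^2) (dg := fun p => 2 * (W p * P2 W p))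
    · intro t _
      exact ((sliceC W hW.continuous t).pow 2).continuousOn
    · exact (continuous_const.mul (hW.continuous.mul (smooth_P2 hW).continuous)).continuousOn
    · intro x _ t _
      have h := (slice2 (hdiff hW) x t).fun_pow 2
      simpa [mul_assoc] using h
  -- derivative of ∫ f·u under the integral sign
  have hDf : ∀ t0 : ℝ, HasDerivAt (fun t => ∫ x in (0:ℝ)..1, f x * U (x, t))
      (∫ x in (0:ℝ)..1, f x * P2 U (x, t0)) t0 := by
    intro t0
    apply hasDerivAt_parametric (g := fun p => f p.1 * U p) (dg := fun p => f p.1 * P2 U p)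
    · intro t _
      exact hf.mul (sliceC U hU.continuous t).continuousOn
    · exact (hf.comp continuous_fst.continuousOn (fun p hp => hp.1)).mul
        hVs.continuous.continuousOn
    · intro x hx t _
      exact HasDerivAt.const_mul (f x) (slice2 hUd x t)
  -- the global derivative formula
  have hF' : ∀ t0 : ℝ, HasDerivAt (Ffun k β f u)
      ((∫ x in (0:ℝ)..1, 2 * (P1 (P1 U) (x, t0) * P2 (P1 (P1 U)) (x, t0)))
        + (∫ x in (0:ℝ)..1, 2 * (P2 U (x, t0) * P2 (P2 U) (x, t0)))
        + (β + ∫ x in (0:ℝ)..1, (P1 U (x, t0))^2)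
            * (∫ x in (0:ℝ)..1, 2 * (P1 U (x, t0) * P2 (P1 U) (x, t0)))
        + k * (∫ x in (0:ℝ)..1, 2 * (U (x, t0) * P2 U (x, t0)))
        - 2 * (∫ x in (0:ℝ)..1, f x * P2 U (x, t0))) t0 := by
    intro t0
    have hFeq : Ffun k β f u = fun t =>
        (∫ x in (0:ℝ)..1, (P1 (P1 U) (x, t))^2) + (∫ x in (0:ℝ)..1, (P2 U (x, t))^2)
        + (1/2) * (β + ∫ x in (0:ℝ)..1, (P1 U (x, t))^2)^2
        + k * (∫ x in (0:ℝ)..1, (U (x, t))^2)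
        - 2 * ∫ x in (0:ℝ)..1, f x * U (x, t) := by
      funext t
      simp only [Ffun, beamEnergy, euxx, eut, eux, eU]
    rw [hFeq]
    have H := ((((hsq (P1 (P1 U)) hW2s t0).add (hsq (P2 U) hVs t0)).add
        ((((hsq (P1 U) hW1s t0).const_add β).fun_pow 2).const_mul (1/2))).add
        ((hsq U hU t0).const_mul k)).sub ((hDf t0).const_mul 2)
    refine H.congr_deriv ?_
    push_cast
    ring
  -- value of the derivative for t ≥ 0
  have hval : ∀ t0 ∈ Ici (0:ℝ),
      ((∫ x in (0:ℝ)..1, 2 * (P1 (P1 U) (x, t0) * P2 (P1 (P1 U)) (x, t0)))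
        + (∫ x in (0:ℝ)..1, 2 * (P2 U (x, t0) * P2 (P2 U) (x, t0)))
        + (β + ∫ x in (0:ℝ)..1, (P1 U (x, t0))^2)
            * (∫ x in (0:ℝ)..1, 2 * (P1 U (x, t0) * P2 (P1 U) (x, t0)))
        + k * (∫ x in (0:ℝ)..1, 2 * (U (x, t0) * P2 U (x, t0)))
        - 2 * (∫ x in (0:ℝ)..1, f x * P2 U (x, t0)))
      = -2 * δ * ∫ x in (0:ℝ)..1, (ut u x t0)^2 := by
    intro t0 ht0
    have hV0 : P2 U (0, t0) = 0 := hbV 0 (fun s hs => (hbc s hs).1) t0 ht0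
    have hV1 : P2 U (1, t0) = 0 := hbV 1 (fun s hs => (hbc s hs).2.1) t0 ht0
    have hW20 : P1 (P1 U) (0, t0) = 0 := by rw [← euxx]; exact (hbc t0 ht0).2.2.1
    have hW21 : P1 (P1 U) (1, t0) = 0 := by rw [← euxx]; exact (hbc t0 ht0).2.2.2
    -- slices as functions of x; their x-derivatives
    have sd : ∀ (W : ℝ × ℝ → ℝ), ContDiff ℝ (⊤:ℕ∞) W →
        ∀ x ∈ uIcc (0:ℝ) 1, HasDerivAt (fun y => W (y, t0)) (P1 W (x, t0)) x :=
      fun W hW x _ => slice1 (hdiff hW) x t0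
    -- first integration by parts pair:  ∫ uxx ∂ₓₓ(ut) = ∫ uxxxx ut
    have hA2 : (∫ x in (0:ℝ)..1, P1 (P1 U) (x, t0) * P1 (P1 (P2 U)) (x, t0))
        = ∫ x in (0:ℝ)..1, P1 (P1 (P1 (P1 U))) (x, t0) * P2 U (x, t0) := by
      have s1 := ibp (a := fun x => P1 (P1 U) (x, t0)) (b := fun x => P1 (P2 U) (x, t0))
        (a' := fun x => P1 (P1 (P1 U)) (x, t0)) (b' := fun x => P1 (P1 (P2 U)) (x, t0))
        (sd _ hW2s) (sd _ hPVs) (sliceC _ hW2s.continuous t0) (sliceC _ hPVs.continuous t0)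
        (sliceC _ hW3s.continuous t0) (sliceC _ hPPVs.continuous t0)
        (by simp [hW20]) (by simp [hW21])
      have s2 := ibp (a := fun x => P1 (P1 (P1 U)) (x, t0)) (b := fun x => P2 U (x, t0))
        (a' := fun x => P1 (P1 (P1 (P1 U))) (x, t0)) (b' := fun x => P1 (P2 U) (x, t0))
        (sd _ hW3s) (sd _ hVs) (sliceC _ hW3s.continuous t0) (sliceC _ hVs.continuous t0)
        (sliceC _ hW4s.continuous t0) (sliceC _ hPVs.continuous t0)
        (by simp [hV0]) (by simp [hV1])
      rw [s1, s2, neg_neg]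
    -- second integration by parts:  ∫ ux ∂ₓ(ut) = -∫ uxx ut
    have hN2 : (∫ x in (0:ℝ)..1, P1 U (x, t0) * P1 (P2 U) (x, t0))
        = -∫ x in (0:ℝ)..1, P1 (P1 U) (x, t0) * P2 U (x, t0) :=
      ibp (a := fun x => P1 U (x, t0)) (b := fun x => P2 U (x, t0))
        (a' := fun x => P1 (P1 U) (x, t0)) (b' := fun x => P1 (P2 U) (x, t0))
        (sd _ hW1s) (sd _ hVs) (sliceC _ hW1s.continuous t0) (sliceC _ hVs.continuous t0)
        (sliceC _ hW2s.continuous t0) (sliceC _ hPVs.continuous t0)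
        (by simp [hV0]) (by simp [hV1])
    -- pointwise form of the PDE
    have hPDE : ∀ x ∈ Icc (0:ℝ) 1, P2 (P2 U) (x, t0)
        = -(P1 (P1 (P1 (P1 U))) (x, t0))
          + (β + ∫ ξ in (0:ℝ)..1, (P1 U (ξ, t0))^2) * P1 (P1 U) (x, t0)
          - k * U (x, t0) - δ * P2 U (x, t0) + f x := by
      intro x hx
      have h := hpde x hx t0 ht0
      simp only [eutt, euxxxx, euxx, eux, eut, eU] at h
      linarith
    -- integrability of all pieces
    have cV : Continuous (fun x => P2 U (x, t0)) := sliceC _ hVs.continuous t0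
    have iW4V : IntervalIntegrable
        (fun x => P1 (P1 (P1 (P1 U))) (x, t0) * P2 U (x, t0)) volume 0 1 :=
      ((sliceC _ hW4s.continuous t0).mul cV).intervalIntegrable 0 1
    have iW2V : IntervalIntegrable
        (fun x => P1 (P1 U) (x, t0) * P2 U (x, t0)) volume 0 1 :=
      ((sliceC _ hW2s.continuous t0).mul cV).intervalIntegrable 0 1
    have iUV : IntervalIntegrable (fun x => U (x, t0) * P2 U (x, t0)) volume 0 1 :=
      ((sliceC _ hU.continuous t0).mul cV).intervalIntegrable 0 1
    have iVsq : IntervalIntegrable (fun x => (P2 U (x, t0))^2) volume 0 1 :=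
      (cV.pow 2).intervalIntegrable 0 1
    have ifV : IntervalIntegrable (fun x => f x * P2 U (x, t0)) volume 0 1 :=
      ((hf.mono (uIcc_of_le zero_le_one).subset).mul cV.continuousOn).intervalIntegrable
    -- expansion of ∫ ut·utt using the PDE
    have hB2 : (∫ x in (0:ℝ)..1, P2 U (x, t0) * P2 (P2 U) (x, t0))
        = -(∫ x in (0:ℝ)..1, P1 (P1 (P1 (P1 U))) (x, t0) * P2 U (x, t0))
          + (β + ∫ x in (0:ℝ)..1, (P1 U (x, t0))^2)
              * (∫ x in (0:ℝ)..1, P1 (P1 U) (x, t0) * P2 U (x, t0))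
          - k * (∫ x in (0:ℝ)..1, U (x, t0) * P2 U (x, t0))
          - δ * (∫ x in (0:ℝ)..1, (P2 U (x, t0))^2)
          + (∫ x in (0:ℝ)..1, f x * P2 U (x, t0)) := by
      have hcong : EqOn (fun x => P2 U (x, t0) * P2 (P2 U) (x, t0))
          (fun x => -(P1 (P1 (P1 (P1 U))) (x, t0) * P2 U (x, t0))
            + (β + ∫ ξ in (0:ℝ)..1, (P1 U (ξ, t0))^2)
                * (P1 (P1 U) (x, t0) * P2 U (x, t0))
            - k * (U (x, t0) * P2 U (x, t0))
            - δ * (P2 U (x, t0))^2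
            + f x * P2 U (x, t0)) (uIcc (0:ℝ) 1) := by
        intro x hx
        rw [uIcc_of_le zero_le_one] at hx
        simp only
        rw [hPDE x hx]
        ring
      have i1 : IntervalIntegrable
          (fun x => -(P1 (P1 (P1 (P1 U))) (x, t0) * P2 U (x, t0))) volume 0 1 := iW4V.neg
      have i2 : IntervalIntegrable
          (fun x => (β + ∫ ξ in (0:ℝ)..1, (P1 U (ξ, t0))^2)
            * (P1 (P1 U) (x, t0) * P2 U (x, t0))) volume 0 1 := iW2V.const_mul _
      have i3 : IntervalIntegrable
          (fun x => -(P1 (P1 (P1 (P1 U))) (x, t0) * P2 U (x, t0))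
            + (β + ∫ ξ in (0:ℝ)..1, (P1 U (ξ, t0))^2)
              * (P1 (P1 U) (x, t0) * P2 U (x, t0))) volume 0 1 := i1.add i2
      have i4 : IntervalIntegrable
          (fun x => -(P1 (P1 (P1 (P1 U))) (x, t0) * P2 U (x, t0))
            + (β + ∫ ξ in (0:ℝ)..1, (P1 U (ξ, t0))^2)
              * (P1 (P1 U) (x, t0) * P2 U (x, t0))
            - k * (U (x, t0) * P2 U (x, t0))) volume 0 1 := i3.sub (iUV.const_mul k)
      have i5 : IntervalIntegrable
          (fun x => -(P1 (P1 (P1 (P1 U))) (x, t0) * P2 U (x, t0))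
            + (β + ∫ ξ in (0:ℝ)..1, (P1 U (ξ, t0))^2)
              * (P1 (P1 U) (x, t0) * P2 U (x, t0))
            - k * (U (x, t0) * P2 U (x, t0))
            - δ * (P2 U (x, t0))^2) volume 0 1 := i4.sub (iVsq.const_mul δ)
      rw [intervalIntegral.integral_congr hcong,
        integral_add i5 ifV,
        integral_sub i4 (iVsq.const_mul δ),
        integral_sub i3 (iUV.const_mul k),
        integral_add i1 i2,
        intervalIntegral.integral_neg, intervalIntegral.integral_const_mul,
        intervalIntegral.integral_const_mul, intervalIntegral.integral_const_mul]
    -- final assembly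
    simp only [eut, sw2, sw1, intervalIntegral.integral_const_mul]
    rw [hA2, hN2, hB2]
    ring
  constructor
  · intro t ht
    have h := hF' t
    rw [hval t ht] at h
    exact h.hasDerivWithinAt
  · apply antitoneOn_of_deriv_nonpos (convex_Ici 0)
    · exact fun t _ => ((hF' t).differentiableAt).continuousAt.continuousWithinAt
    · intro t ht
      exact ((hF' t).differentiableAt).differentiableWithinAt
    · intro t ht
      rw [interior_Ici] at ht
      rw [(hF' t).deriv, hval t (le_of_lt (mem_Ioi.mp ht))]
      have hnn : 0 ≤ ∫ x in (0:ℝ)..1, (ut u x t)^2 :=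
        intervalIntegral.integral_nonneg zero_le_one (fun x _ => sq_nonneg _)
      nlinarith
end

section
/- Let u be a classical solution of the beam equation. Then there exists a constant C > 0, depending only on ‖f‖, β, k, and the initial data u(·,0), ∂ₜu(·,0), such that E(t) ≤ C for all t ≥ 0. -/
open Real Set MeasureTheory


noncomputable def Dx (G : ℝ × ℝ → ℝ) : ℝ × ℝ → ℝ := fun p => fderiv ℝ G p (1, 0)
noncomputable def Dt (G : ℝ × ℝ → ℝ) : ℝ × ℝ → ℝ := fun p => fderiv ℝ G p (0, 1)

lemma contDiff_Dx {G : ℝ × ℝ → ℝ} (hG : ContDiff ℝ (⊤ : ℕ∞) G) : ContDiff ℝ (⊤ : ℕ∞) (Dx G) :=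
  (hG.fderiv_right (by simp)).clm_apply contDiff_const

lemma contDiff_Dt {G : ℝ × ℝ → ℝ} (hG : ContDiff ℝ (⊤ : ℕ∞) G) : ContDiff ℝ (⊤ : ℕ∞) (Dt G) :=
  (hG.fderiv_right (by simp)).clm_apply contDiff_const

lemma hasDerivAt_x {G : ℝ × ℝ → ℝ} (hG : ContDiff ℝ (⊤ : ℕ∞) G) (x t : ℝ) :
    HasDerivAt (fun y => G (y, t)) (Dx G (x, t)) x := by
  have h1 : HasFDerivAt G (fderiv ℝ G (x, t)) (x, t) :=
    (hG.differentiable (by simp) (x, t)).hasFDerivAt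
  have h2 : HasDerivAt (fun y : ℝ => (y, t)) ((1 : ℝ), (0 : ℝ)) x :=
    HasDerivAt.prodMk (hasDerivAt_id x) (hasDerivAt_const x t)
  exact h1.comp_hasDerivAt x h2

lemma hasDerivAt_t {G : ℝ × ℝ → ℝ} (hG : ContDiff ℝ (⊤ : ℕ∞) G) (x t : ℝ) :
    HasDerivAt (fun s => G (x, s)) (Dt G (x, t)) t := by
  have h1 : HasFDerivAt G (fderiv ℝ G (x, t)) (x, t) :=
    (hG.differentiable (by simp) (x, t)).hasFDerivAt
  have h2 : HasDerivAt (fun s : ℝ => (x, s)) ((0 : ℝ), (1 : ℝ)) t :=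
    HasDerivAt.prodMk (hasDerivAt_const t x) (hasDerivAt_id t)
  exact h1.comp_hasDerivAt t h2

lemma schwarz {G : ℝ × ℝ → ℝ} (hG : ContDiff ℝ (⊤ : ℕ∞) G) : Dt (Dx G) = Dx (Dt G) := by
  funext p
  have hsym : IsSymmSndFDerivAt ℝ G p :=
    hG.contDiffAt.isSymmSndFDerivAt (by rw [minSmoothness_of_isRCLikeNormedField]; exact WithTop.coe_le_coe.2 le_top)
  have key : ∀ v w : ℝ × ℝ, fderiv ℝ (fun q => fderiv ℝ G q v) p w
      = fderiv ℝ (fderiv ℝ G) p w v := by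
    intro v w
    have hL : HasFDerivAt (fun q => (fderiv ℝ G q) v)
        (((ContinuousLinearMap.apply ℝ ℝ v).comp (fderiv ℝ (fderiv ℝ G) p))) p :=
      (ContinuousLinearMap.apply ℝ ℝ v).hasFDerivAt.comp p
        ((hG.fderiv_right (m := (⊤ : ℕ∞)) (by simp)).differentiable (by simp) p).hasFDerivAt
    rw [hL.fderiv]; rfl
  show fderiv ℝ (fun q => fderiv ℝ G q (1,0)) p (0,1)
      = fderiv ℝ (fun q => fderiv ℝ G q (0,1)) p (1,0)
  rw [key, key, hsym]

lemma contSlice {G : ℝ × ℝ → ℝ} (hG : Continuous G) (s : ℝ) :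
    Continuous fun x => G (x, s) := hG.comp (continuous_id.prodMk continuous_const)

/-- differentiation under the integral sign, with a continuous weight `c`. -/
lemma hasDerivAt_cint {c : ℝ → ℝ} (hc : ContinuousOn c (Icc (0:ℝ) 1))
    {H H' : ℝ × ℝ → ℝ} (hH : Continuous H) (hH' : Continuous H')
    (hd : ∀ x s : ℝ, HasDerivAt (fun s' => H (x, s')) (H' (x, s)) s) (t : ℝ) :
    HasDerivAt (fun s => ∫ x in (0:ℝ)..1, c x * H (x, s))
      (∫ x in (0:ℝ)..1, c x * H' (x, t)) t := by
  obtain ⟨M, hM⟩ : ∃ M, ∀ p ∈ (Icc (0:ℝ) 1 ×ˢ Icc (t-1) (t+1)), ‖H' p‖ ≤ M :=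
    (isCompact_Icc.prod isCompact_Icc).exists_bound_of_continuousOn hH'.continuousOn
  obtain ⟨Mc, hMc⟩ : ∃ Mc, ∀ x ∈ Icc (0:ℝ) 1, ‖c x‖ ≤ Mc :=
    isCompact_Icc.exists_bound_of_continuousOn hc
  have hmeas : ∀ s : ℝ, AEStronglyMeasurable (fun x => c x * H (x, s))
      (volume.restrict (Set.uIoc (0:ℝ) 1)) := by
    intro s
    have : ContinuousOn (fun x => c x * H (x, s)) (Icc (0:ℝ) 1) :=
      hc.mul (contSlice hH s).continuousOn
    exact (this.mono (by rw [uIoc_of_le (by norm_num : (0:ℝ) ≤ 1)]; exact Ioc_subset_Icc_self)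
      ).aestronglyMeasurable measurableSet_uIoc
  have hint : ∀ s : ℝ, IntervalIntegrable (fun x => c x * H (x, s)) volume 0 1 := by
    intro s
    apply ContinuousOn.intervalIntegrable
    rw [uIcc_of_le (by norm_num : (0:ℝ) ≤ 1)]
    exact hc.mul (contSlice hH s).continuousOn
  have hmeas' : AEStronglyMeasurable (fun x => c x * H' (x, t))
      (volume.restrict (Set.uIoc (0:ℝ) 1)) := by
    have : ContinuousOn (fun x => c x * H' (x, t)) (Icc (0:ℝ) 1) :=
      hc.mul (contSlice hH' t).continuousOn
    exact (this.mono (by rw [uIoc_of_le (by norm_num : (0:ℝ) ≤ 1)]; exact Ioc_subset_Icc_self)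
      ).aestronglyMeasurable measurableSet_uIoc
  have key := intervalIntegral.hasDerivAt_integral_of_dominated_loc_of_deriv_le
    (F := fun s x => c x * H (x, s)) (F' := fun s x => c x * H' (x, s)) (x₀ := t)
    (a := 0) (b := 1) (bound := fun _ => Mc * M + |Mc * M|) (μ := volume) (s := Metric.ball t 1) (Metric.ball_mem_nhds t one_pos)
    (Filter.Eventually.of_forall fun s => hmeas s) (hint t) hmeas'
    (Filter.Eventually.of_forall fun x hx s hs => by
      have hx' : x ∈ Icc (0:ℝ) 1 := by
        rw [uIoc_of_le (by norm_num : (0:ℝ) ≤ 1)] at hx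
        exact Ioc_subset_Icc_self hx
      have hs' : s ∈ Icc (t-1) (t+1) := by
        have := abs_lt.1 (by simpa [Real.dist_eq] using hs)
        exact ⟨by linarith [this.1], by linarith [this.2]⟩
      have h1 : ‖c x * H' (x, s)‖ ≤ Mc * M := by
        rw [norm_mul]
        exact mul_le_mul (hMc x hx') (hM (x, s) ⟨hx', hs'⟩) (norm_nonneg _)
          ((norm_nonneg _).trans (hMc x hx'))
      refine h1.trans ?_
      show Mc * M ≤ Mc * M + |Mc * M|
      linarith [abs_nonneg (Mc * M)])
    intervalIntegrable_const
    (Filter.Eventually.of_forall fun x _ s _ => (hd x s).const_mul (c x))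
  exact key.2

/-- Uniform-in-time bound on the energy of a classical solution. -/
theorem stmt12 (k δ β : ℝ) (hk : 0 < k) (hδ : 0 < δ)
    (f : ℝ → ℝ) (hf : ContinuousOn f (Icc (0:ℝ) 1))
    (u : ℝ → ℝ → ℝ) (hu : IsBeamSol k δ β f u) :
    ∃ C : ℝ, 0 < C ∧ ∀ t ∈ Ici (0:ℝ), beamEnergy u t ≤ C := by
  obtain ⟨hG, hPDE, hBC⟩ := hu
  set G : ℝ × ℝ → ℝ := fun p => u p.1 p.2 with hGdef
  set g1 : ℝ × ℝ → ℝ := Dx G with hg1def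
  set g2 : ℝ × ℝ → ℝ := Dx g1 with hg2def
  set g3 : ℝ × ℝ → ℝ := Dx g2 with hg3def
  set g4 : ℝ × ℝ → ℝ := Dx g3 with hg4def
  set w : ℝ × ℝ → ℝ := Dt G with hwdef
  set w1 : ℝ × ℝ → ℝ := Dx w with hw1def
  set w2 : ℝ × ℝ → ℝ := Dx w1 with hw2def
  set z : ℝ × ℝ → ℝ := Dt w with hzdef
  have sG : ContDiff ℝ (⊤ : ℕ∞) G := hG
  have sg1 : ContDiff ℝ (⊤ : ℕ∞) g1 := contDiff_Dx sG
  have sg2 : ContDiff ℝ (⊤ : ℕ∞) g2 := contDiff_Dx sg1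
  have sg3 : ContDiff ℝ (⊤ : ℕ∞) g3 := contDiff_Dx sg2
  have sg4 : ContDiff ℝ (⊤ : ℕ∞) g4 := contDiff_Dx sg3
  have sw : ContDiff ℝ (⊤ : ℕ∞) w := contDiff_Dt sG
  have sw1 : ContDiff ℝ (⊤ : ℕ∞) w1 := contDiff_Dx sw
  have sw2 : ContDiff ℝ (⊤ : ℕ∞) w2 := contDiff_Dx sw1
  have sz : ContDiff ℝ (⊤ : ℕ∞) z := contDiff_Dt sw
  have hsch1 : Dt g1 = w1 := schwarz sG
  have hsch2 : Dt g2 = w2 := (schwarz sg1).trans (congrArg Dx hsch1)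
  -- representation lemmas
  have hux' : ∀ x t : ℝ, ux u x t = g1 (x, t) := fun x t => (hasDerivAt_x sG x t).deriv
  have hderiv1 : ∀ t : ℝ, deriv (fun y => u y t) = fun y => g1 (y, t) :=
    fun t => funext fun y => (hasDerivAt_x sG y t).deriv
  have hderiv2 : ∀ t : ℝ, deriv (fun y => g1 (y, t)) = fun y => g2 (y, t) :=
    fun t => funext fun y => (hasDerivAt_x sg1 y t).deriv
  have hderiv3 : ∀ t : ℝ, deriv (fun y => g2 (y, t)) = fun y => g3 (y, t) :=
    fun t => funext fun y => (hasDerivAt_x sg2 y t).deriv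
  have huxx' : ∀ x t : ℝ, uxx u x t = g2 (x, t) := by
    intro x t
    show iteratedDeriv 2 (fun y => u y t) x = g2 (x, t)
    rw [show (2:ℕ) = 1 + 1 from rfl, iteratedDeriv_succ, iteratedDeriv_one, hderiv1 t]
    exact (hasDerivAt_x sg1 x t).deriv
  have huxxxx' : ∀ x t : ℝ, uxxxx u x t = g4 (x, t) := by
    intro x t
    show iteratedDeriv 4 (fun y => u y t) x = g4 (x, t)
    rw [show (4:ℕ) = 3 + 1 from rfl, iteratedDeriv_succ, show (3:ℕ) = 2 + 1 from rfl,
      iteratedDeriv_succ, show (2:ℕ) = 1 + 1 from rfl, iteratedDeriv_succ, iteratedDeriv_one,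
      hderiv1 t, hderiv2 t, hderiv3 t]
    exact (hasDerivAt_x sg3 x t).deriv
  have hut' : ∀ x t : ℝ, ut u x t = w (x, t) := fun x t => (hasDerivAt_t sG x t).deriv
  have hutt' : ∀ x t : ℝ, utt u x t = z (x, t) := by
    intro x t
    show iteratedDeriv 2 (fun s => u x s) t = z (x, t)
    rw [show (2:ℕ) = 1 + 1 from rfl, iteratedDeriv_succ, iteratedDeriv_one,
      show deriv (fun s => u x s) = fun s => w (x, s) from
        funext fun s => (hasDerivAt_t sG x s).deriv]
    exact (hasDerivAt_t sw x t).deriv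
  -- generic derivative of ∫ H² under the integral
  have hsq : ∀ (H : ℝ × ℝ → ℝ), ContDiff ℝ (⊤ : ℕ∞) H → ∀ t : ℝ,
      HasDerivAt (fun s => ∫ x in (0:ℝ)..1, (H (x, s))^2)
        (∫ x in (0:ℝ)..1, 2 * H (x, t) * Dt H (x, t)) t := by
    intro H hH t
    have h := hasDerivAt_cint (c := fun _ => (1:ℝ)) continuousOn_const
      (H := fun p => (H p)^2) (H' := fun p => 2 * H p * Dt H p)
      (hH.continuous.pow 2)
      (((continuous_const.mul hH.continuous).mul (contDiff_Dt hH).continuous))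
      (fun x s => by simpa [Pi.pow_def] using (hasDerivAt_t hH x s).pow 2) t
    simpa only [one_mul] using h
  have hA' : ∀ t : ℝ, HasDerivAt (fun s => ∫ x in (0:ℝ)..1, (w (x, s))^2)
      (∫ x in (0:ℝ)..1, 2 * w (x, t) * z (x, t)) t := fun t => hsq w sw t
  have hB' : ∀ t : ℝ, HasDerivAt (fun s => ∫ x in (0:ℝ)..1, (g2 (x, s))^2)
      (∫ x in (0:ℝ)..1, 2 * g2 (x, t) * w2 (x, t)) t := by
    intro t
    have h := hsq g2 sg2 t
    rwa [hsch2] at h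
  have hC' : ∀ t : ℝ, HasDerivAt (fun s => ∫ x in (0:ℝ)..1, (G (x, s))^2)
      (∫ x in (0:ℝ)..1, 2 * G (x, t) * w (x, t)) t := fun t => hsq G sG t
  have hD' : ∀ t : ℝ, HasDerivAt (fun s => ∫ x in (0:ℝ)..1, (g1 (x, s))^2)
      (∫ x in (0:ℝ)..1, 2 * g1 (x, t) * w1 (x, t)) t := by
    intro t
    have h := hsq g1 sg1 t
    rwa [hsch1] at h
  have hP' : ∀ t : ℝ, HasDerivAt (fun s => ∫ x in (0:ℝ)..1, f x * G (x, s))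
      (∫ x in (0:ℝ)..1, f x * w (x, t)) t :=
    fun t => hasDerivAt_cint hf sG.continuous sw.continuous
      (fun x s => hasDerivAt_t sG x s) t
  have hQ' : ∀ t : ℝ, HasDerivAt
      (fun s => (β + ∫ x in (0:ℝ)..1, (g1 (x, s))^2)^2)
      (2 * (β + ∫ x in (0:ℝ)..1, (g1 (x, t))^2)
        * ∫ x in (0:ℝ)..1, 2 * g1 (x, t) * w1 (x, t)) t := by
    intro t
    have h := ((hD' t).const_add β).pow 2
    simpa [mul_assoc, Pi.pow_def] using h
  set F : ℝ → ℝ := fun s =>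
      1/2 * (∫ x in (0:ℝ)..1, (w (x, s))^2) + 1/2 * (∫ x in (0:ℝ)..1, (g2 (x, s))^2)
        + k/2 * (∫ x in (0:ℝ)..1, (G (x, s))^2)
        + 1/4 * (β + ∫ x in (0:ℝ)..1, (g1 (x, s))^2)^2
        - ∫ x in (0:ℝ)..1, f x * G (x, s) with hFdef
  have hF' : ∀ t : ℝ, HasDerivAt F
      (1/2 * (∫ x in (0:ℝ)..1, 2 * w (x, t) * z (x, t))
        + 1/2 * (∫ x in (0:ℝ)..1, 2 * g2 (x, t) * w2 (x, t))
        + k/2 * (∫ x in (0:ℝ)..1, 2 * G (x, t) * w (x, t))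
        + 1/4 * (2 * (β + ∫ x in (0:ℝ)..1, (g1 (x, t))^2)
            * ∫ x in (0:ℝ)..1, 2 * g1 (x, t) * w1 (x, t))
        - ∫ x in (0:ℝ)..1, f x * w (x, t)) t := by
    intro t
    exact (((((hA' t).const_mul (1/2)).add ((hB' t).const_mul (1/2))).add
      ((hC' t).const_mul (k/2))).add ((hQ' t).const_mul (1/4))).sub (hP' t)
  have cI : ∀ {Φ : ℝ → ℝ}, Continuous Φ → IntervalIntegrable Φ volume 0 1 :=
    fun h => h.intervalIntegrable 0 1
  have hpull : ∀ (H K : ℝ × ℝ → ℝ) (s : ℝ),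
      (∫ x in (0:ℝ)..1, 2 * H (x, s) * K (x, s))
        = 2 * ∫ x in (0:ℝ)..1, H (x, s) * K (x, s) := by
    intro H K s
    rw [← intervalIntegral.integral_const_mul]
    exact intervalIntegral.integral_congr fun x _ => by ring
  have hwb : ∀ s : ℝ, 0 < s → ∀ xb : ℝ, (∀ r ∈ Ici (0:ℝ), u xb r = 0) → w (xb, s) = 0 := by
    intro s hs xb hub
    have hev : (fun r => G (xb, r)) =ᶠ[nhds s] (fun _ => (0:ℝ)) := by
      filter_upwards [Ioi_mem_nhds hs] with r hr
      exact hub r (mem_Ici.2 (le_of_lt (mem_Ioi.1 hr)))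
    have h1 : w (xb, s) = deriv (fun r => G (xb, r)) s := ((hasDerivAt_t sG xb s).deriv).symm
    rw [h1, hev.deriv_eq, deriv_const]
  have hexpr : ∀ s : ℝ, 0 < s →
      (1/2 * (∫ x in (0:ℝ)..1, 2 * w (x, s) * z (x, s))
        + 1/2 * (∫ x in (0:ℝ)..1, 2 * g2 (x, s) * w2 (x, s))
        + k/2 * (∫ x in (0:ℝ)..1, 2 * G (x, s) * w (x, s))
        + 1/4 * (2 * (β + ∫ x in (0:ℝ)..1, (g1 (x, s))^2)
            * ∫ x in (0:ℝ)..1, 2 * g1 (x, s) * w1 (x, s))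
        - ∫ x in (0:ℝ)..1, f x * w (x, s))
      = -δ * ∫ x in (0:ℝ)..1, (w (x, s))^2 := by
    intro s hs
    have hbw0 : w (0, s) = 0 := hwb s hs 0 (fun r hr => (hBC r hr).1)
    have hbw1 : w (1, s) = 0 := hwb s hs 1 (fun r hr => (hBC r hr).2.1)
    have hbc := hBC s hs.le
    have hg20 : g2 (0, s) = 0 := by rw [← huxx' 0 s]; exact hbc.2.2.1
    have hg21 : g2 (1, s) = 0 := by rw [← huxx' 1 s]; exact hbc.2.2.2
    have cw : Continuous fun x => w (x, s) := contSlice sw.continuous s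
    have cw1 : Continuous fun x => w1 (x, s) := contSlice sw1.continuous s
    have cw2 : Continuous fun x => w2 (x, s) := contSlice sw2.continuous s
    have cz : Continuous fun x => z (x, s) := contSlice sz.continuous s
    have cG : Continuous fun x => G (x, s) := contSlice sG.continuous s
    have cg1 : Continuous fun x => g1 (x, s) := contSlice sg1.continuous s
    have cg2 : Continuous fun x => g2 (x, s) := contSlice sg2.continuous s
    have cg3 : Continuous fun x => g3 (x, s) := contSlice sg3.continuous s
    have cg4 : Continuous fun x => g4 (x, s) := contSlice sg4.continuous s
    have ibp1 : (∫ x in (0:ℝ)..1, w (x, s) * g4 (x, s))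
        = -(∫ x in (0:ℝ)..1, w1 (x, s) * g3 (x, s)) := by
      have h := intervalIntegral.integral_mul_deriv_eq_deriv_mul
        (u := fun x => w (x, s)) (u' := fun x => w1 (x, s))
        (v := fun x => g3 (x, s)) (v' := fun x => g4 (x, s))
        (fun x _ => hasDerivAt_x sw x s) (fun x _ => hasDerivAt_x sg3 x s)
        (cI cw1) (cI cg4)
      simp only [hbw0, hbw1, zero_mul, sub_zero, zero_sub, sub_self] at h
      exact h
    have ibp2 : (∫ x in (0:ℝ)..1, w1 (x, s) * g3 (x, s))
        = -(∫ x in (0:ℝ)..1, w2 (x, s) * g2 (x, s)) := by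
      have h := intervalIntegral.integral_mul_deriv_eq_deriv_mul
        (u := fun x => w1 (x, s)) (u' := fun x => w2 (x, s))
        (v := fun x => g2 (x, s)) (v' := fun x => g3 (x, s))
        (fun x _ => hasDerivAt_x sw1 x s) (fun x _ => hasDerivAt_x sg2 x s)
        (cI cw2) (cI cg3)
      simp only [hg20, hg21, mul_zero, sub_zero, zero_sub, sub_self] at h
      exact h
    have ibp3 : (∫ x in (0:ℝ)..1, g1 (x, s) * w1 (x, s))
        = -(∫ x in (0:ℝ)..1, g2 (x, s) * w (x, s)) := by
      have h := intervalIntegral.integral_mul_deriv_eq_deriv_mul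
        (u := fun x => g1 (x, s)) (u' := fun x => g2 (x, s))
        (v := fun x => w (x, s)) (v' := fun x => w1 (x, s))
        (fun x _ => hasDerivAt_x sg1 x s) (fun x _ => hasDerivAt_x sw x s)
        (cI cg2) (cI cw1)
      simp only [hbw0, hbw1, mul_zero, sub_zero, zero_sub, sub_self] at h
      exact h
    have hDint : ∀ r : ℝ, (∫ ξ in (0:ℝ)..1, (ux u ξ r)^2) = ∫ x in (0:ℝ)..1, (g1 (x, r))^2 :=
      fun r => intervalIntegral.integral_congr (fun ξ _ => by rw [hux'])
    have hpde : ∀ x ∈ Icc (0:ℝ) 1,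
        z (x, s) = -(g4 (x, s)) + (β + ∫ y in (0:ℝ)..1, (g1 (y, s))^2) * g2 (x, s)
          - k * G (x, s) - δ * w (x, s) + f x := by
      intro x hx
      have h := hPDE x hx s hs.le
      rw [hutt', huxxxx', huxx', hut', hDint, show u x s = G (x, s) from rfl] at h
      linarith
    have ie_wg4 : IntervalIntegrable (fun x => -(w (x, s) * g4 (x, s))) volume 0 1 :=
      cI (cw.mul cg4).neg
    have ie_wg2 : IntervalIntegrable
        (fun x => (β + ∫ y in (0:ℝ)..1, (g1 (y, s))^2) * (w (x, s) * g2 (x, s))) volume 0 1 :=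
      cI (continuous_const.mul (cw.mul cg2))
    have ie_Gw : IntervalIntegrable (fun x => -k * (G (x, s) * w (x, s))) volume 0 1 :=
      cI (continuous_const.mul (cG.mul cw))
    have ie_ww : IntervalIntegrable (fun x => -δ * (w (x, s))^2) volume 0 1 :=
      cI (continuous_const.mul (cw.pow 2))
    have ie_fw : IntervalIntegrable (fun x => f x * w (x, s)) volume 0 1 := by
      apply ContinuousOn.intervalIntegrable
      rw [uIcc_of_le (by norm_num : (0:ℝ) ≤ 1)]
      exact hf.mul cw.continuousOn
    have e1 : (∫ x in (0:ℝ)..1, w (x, s) * z (x, s))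
        = -(∫ x in (0:ℝ)..1, w (x, s) * g4 (x, s))
          + ((β + ∫ y in (0:ℝ)..1, (g1 (y, s))^2) * (∫ x in (0:ℝ)..1, w (x, s) * g2 (x, s))
          + (-k * (∫ x in (0:ℝ)..1, G (x, s) * w (x, s))
          + (-δ * (∫ x in (0:ℝ)..1, (w (x, s))^2) + ∫ x in (0:ℝ)..1, f x * w (x, s)))) := by
      have hcong : EqOn (fun x => w (x, s) * z (x, s))
          (fun x => -(w (x, s) * g4 (x, s))
            + ((β + ∫ y in (0:ℝ)..1, (g1 (y, s))^2) * (w (x, s) * g2 (x, s))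
            + (-k * (G (x, s) * w (x, s))
            + (-δ * (w (x, s))^2 + f x * w (x, s))))) (uIcc 0 1) := by
        intro x hx
        rw [uIcc_of_le (by norm_num : (0:ℝ) ≤ 1)] at hx
        simp only []
        rw [hpde x hx]; ring
      rw [intervalIntegral.integral_congr hcong,
        intervalIntegral.integral_add ie_wg4 (ie_wg2.add (ie_Gw.add (ie_ww.add ie_fw))),
        intervalIntegral.integral_add ie_wg2 (ie_Gw.add (ie_ww.add ie_fw)),
        intervalIntegral.integral_add ie_Gw (ie_ww.add ie_fw),
        intervalIntegral.integral_add ie_ww ie_fw,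
        intervalIntegral.integral_neg, intervalIntegral.integral_const_mul,
        intervalIntegral.integral_const_mul, intervalIntegral.integral_const_mul]
    have comm1 : (∫ x in (0:ℝ)..1, w (x, s) * g2 (x, s))
        = ∫ x in (0:ℝ)..1, g2 (x, s) * w (x, s) :=
      intervalIntegral.integral_congr fun x _ => mul_comm _ _
    have comm2 : (∫ x in (0:ℝ)..1, w2 (x, s) * g2 (x, s))
        = ∫ x in (0:ℝ)..1, g2 (x, s) * w2 (x, s) :=
      intervalIntegral.integral_congr fun x _ => mul_comm _ _
    rw [hpull w z s, hpull g2 w2 s, hpull G w s, hpull g1 w1 s, e1, ibp1, ibp2, ibp3,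
      comm1, comm2]
    ring
  have hdiff : Differentiable ℝ F := fun sx => (hF' sx).differentiableAt
  have hmono : AntitoneOn F (Ici 0) := by
    apply antitoneOn_of_deriv_nonpos (convex_Ici 0) hdiff.continuous.continuousOn
      (fun x _ => (hdiff x).differentiableWithinAt)
    intro x hx
    rw [interior_Ici] at hx
    rw [(hF' x).deriv, hexpr x hx]
    have hnn : 0 ≤ ∫ xx in (0:ℝ)..1, (w (xx, x))^2 :=
      intervalIntegral.integral_nonneg (by norm_num) (fun y _ => sq_nonneg _)
    nlinarith [hδ, hnn]
  obtain ⟨M0, hM0⟩ := isCompact_Icc.exists_bound_of_continuousOn hf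
  set Mf := max M0 0 with hMf
  have hMfnn : 0 ≤ Mf := le_max_right _ _
  have hMfb : ∀ x ∈ Icc (0:ℝ) 1, |f x| ≤ Mf := fun x hx => (hM0 x hx).trans (le_max_left _ _)
  refine ⟨max (2 * F 0 + Mf + Mf^2/2 - Mf*β) 1,
    lt_of_lt_of_le one_pos (le_max_right _ _), ?_⟩
  intro t ht
  have cg1t : Continuous fun y => g1 (y, t) := contSlice sg1.continuous t
  have cGt : Continuous fun x => G (x, t) := contSlice sG.continuous t
  have hKb : ∀ x ∈ Icc (0:ℝ) 1, |G (x, t)| ≤ ∫ y in (0:ℝ)..1, |g1 (y, t)| := by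
    intro x hx
    have hftc : ∫ y in (0:ℝ)..x, g1 (y, t) = G (x, t) - G (0, t) :=
      intervalIntegral.integral_eq_sub_of_hasDerivAt (fun y _ => hasDerivAt_x sG y t)
        (cg1t.intervalIntegrable 0 x)
    have hG0 : G (0, t) = 0 := (hBC t ht).1
    have h1 : |G (x, t)| = |∫ y in (0:ℝ)..x, g1 (y, t)| := by rw [hftc, hG0, sub_zero]
    rw [h1]
    have h2 : |∫ y in (0:ℝ)..x, g1 (y, t)| ≤ ∫ y in (0:ℝ)..x, |g1 (y, t)| :=
      intervalIntegral.abs_integral_le_integral_abs hx.1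
    have hadd := intervalIntegral.integral_add_adjacent_intervals
      (a := (0:ℝ)) (b := x) (c := 1) (μ := volume) (f := fun y => |g1 (y, t)|)
      (cg1t.abs.intervalIntegrable 0 x) (cg1t.abs.intervalIntegrable x 1)
    have hnn : 0 ≤ ∫ y in x..1, |g1 (y, t)| :=
      intervalIntegral.integral_nonneg hx.2 (fun _ _ => abs_nonneg _)
    linarith
  have hKD : (∫ y in (0:ℝ)..1, |g1 (y, t)|)
      ≤ 1/2 + 1/2 * ∫ y in (0:ℝ)..1, (g1 (y, t))^2 := by
    have h1 : (∫ y in (0:ℝ)..1, |g1 (y, t)|)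
        ≤ ∫ y in (0:ℝ)..1, (1/2 + 1/2 * (g1 (y, t))^2) :=
      intervalIntegral.integral_mono_on (by norm_num) (cg1t.abs.intervalIntegrable 0 1)
        ((continuous_const.add (continuous_const.mul (cg1t.pow 2))).intervalIntegrable 0 1)
        (fun y _ => by nlinarith [sq_nonneg (|g1 (y, t)| - 1), sq_abs (g1 (y, t))])
    have h2 : (∫ y in (0:ℝ)..1, (1/2 + 1/2 * (g1 (y, t))^2))
        = 1/2 + 1/2 * ∫ y in (0:ℝ)..1, (g1 (y, t))^2 := by
      rw [intervalIntegral.integral_add intervalIntegrable_const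
        (by exact (continuous_const.mul (cg1t.pow 2)).intervalIntegrable 0 1 :
          IntervalIntegrable (fun y => 1/2 * (g1 (y, t))^2) volume 0 1),
        intervalIntegral.integral_const_mul, intervalIntegral.integral_const]
      norm_num
    linarith
  have hPt : (∫ x in (0:ℝ)..1, f x * G (x, t))
      ≤ Mf * (1/2 + 1/2 * ∫ y in (0:ℝ)..1, (g1 (y, t))^2) := by
    have hint1 : IntervalIntegrable (fun x => f x * G (x, t)) volume 0 1 := by
      apply ContinuousOn.intervalIntegrable
      rw [uIcc_of_le (by norm_num : (0:ℝ) ≤ 1)]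
      exact hf.mul cGt.continuousOn
    have h1 : (∫ x in (0:ℝ)..1, f x * G (x, t))
        ≤ ∫ _x in (0:ℝ)..1, Mf * (1/2 + 1/2 * ∫ y in (0:ℝ)..1, (g1 (y, t))^2) := by
      apply intervalIntegral.integral_mono_on (by norm_num) hint1 intervalIntegrable_const
      intro x hx
      have hb1 : f x * G (x, t) ≤ |f x| * |G (x, t)| :=
        (le_abs_self _).trans (le_of_eq (abs_mul _ _))
      have hb2 : |f x| * |G (x, t)| ≤ Mf * (1/2 + 1/2 * ∫ y in (0:ℝ)..1, (g1 (y, t))^2) :=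
        mul_le_mul (hMfb x hx) ((hKb x hx).trans hKD) (abs_nonneg _) hMfnn
      linarith
    rw [intervalIntegral.integral_const] at h1
    simpa using h1
  have hFt : F t ≤ F 0 := hmono self_mem_Ici ht ht
  have hE : beamEnergy u t
      = (∫ x in (0:ℝ)..1, (g2 (x, t))^2) + ∫ x in (0:ℝ)..1, (w (x, t))^2 := by
    show ((∫ x in (0:ℝ)..1, (uxx u x t)^2) + ∫ x in (0:ℝ)..1, (ut u x t)^2) = _
    rw [show (∫ x in (0:ℝ)..1, (uxx u x t)^2) = ∫ x in (0:ℝ)..1, (g2 (x, t))^2 from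
        intervalIntegral.integral_congr fun x _ => by rw [huxx'],
      show (∫ x in (0:ℝ)..1, (ut u x t)^2) = ∫ x in (0:ℝ)..1, (w (x, t))^2 from
        intervalIntegral.integral_congr fun x _ => by rw [hut']]
  rw [hE]
  have hFtval : F t = 1/2 * (∫ x in (0:ℝ)..1, (w (x, t))^2)
      + 1/2 * (∫ x in (0:ℝ)..1, (g2 (x, t))^2)
      + k/2 * (∫ x in (0:ℝ)..1, (G (x, t))^2)
      + 1/4 * (β + ∫ x in (0:ℝ)..1, (g1 (x, t))^2)^2
      - ∫ x in (0:ℝ)..1, f x * G (x, t) := rfl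
  have hCnn : 0 ≤ ∫ x in (0:ℝ)..1, (G (x, t))^2 :=
    intervalIntegral.integral_nonneg (by norm_num) (fun y _ => sq_nonneg _)
  have hqn : 0 ≤ ((β + ∫ x in (0:ℝ)..1, (g1 (x, t))^2)/2 - Mf/2)^2 := sq_nonneg _
  have habs : ∀ (A B Cq Dq P F0 Ft Mf' k' β' : ℝ), Ft ≤ F0 → P ≤ Mf' * (1/2 + 1/2 * Dq) →
      0 ≤ Cq → 0 ≤ ((β' + Dq)/2 - Mf'/2)^2 →
      Ft = 1/2 * A + 1/2 * B + k'/2 * Cq + 1/4 * (β' + Dq)^2 - P → 0 ≤ k' * Cq →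
      B + A ≤ 2 * F0 + Mf' + Mf'^2/2 - Mf'*β' := by
    intro A B Cq Dq P F0 Ft Mf' k' β' h1 h2 h3 h4 h5 h6
    nlinarith [h1, h2, h3, h4, h5, h6]
  have hfinal : (∫ x in (0:ℝ)..1, (g2 (x, t))^2) + (∫ x in (0:ℝ)..1, (w (x, t))^2)
      ≤ 2 * F 0 + Mf + Mf^2/2 - Mf*β :=
    habs (∫ x in (0:ℝ)..1, (w (x, t))^2) (∫ x in (0:ℝ)..1, (g2 (x, t))^2)
      (∫ x in (0:ℝ)..1, (G (x, t))^2) (∫ x in (0:ℝ)..1, (g1 (x, t))^2)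
      (∫ x in (0:ℝ)..1, f x * G (x, t)) (F 0) (F t) Mf k β
      hFt hPt hCnn hqn hFtval (mul_nonneg hk.le hCnn)
  exact hfinal.trans (le_max_left _ _)
end
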